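/- arXiv:2307.01140 — 7 statements merged into one kernel-verified Lean document; each statement's English description precedes it below -/
import Mathlib

section
/- Let X ⊂ ℝ⁴ be a bounded open set whose boundary is a finite union of compact subsets of smooth codimension-1 submanifolds of ℝ⁴. Then there exists a constant C > 0 such that for all d > 0, the Lebesgue measure of {x ∈ X : dist(x, ∂X) < d} is at most C·d. -/
open MeasureTheory Metric Set

/-- A smooth codimension-1 submanifold (hypersurface) of ℝ⁴, described locally as a
regular level set of a smooth function. -/
def IsSmoothHypersurface (S : Set (EuclideanSpace ℝ (Fin 4))) : Prop :=
  ∀ x ∈ S, ∃ U : Set (EuclideanSpace ℝ (Fin 4)), IsOpen U ∧ x ∈ U ∧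
    ∃ f : EuclideanSpace ℝ (Fin 4) → ℝ, ContDiffOn ℝ (⊤ : ℕ∞) f U ∧
      (∀ y ∈ U, fderivWithin ℝ f U y ≠ 0) ∧ S ∩ U = {y ∈ U | f y = 0}

local notation "E4" => EuclideanSpace ℝ (Fin 4)

set_option maxHeartbeats 1000000 in
/-- Local estimate: near a point of `K ⊆ S`, the volume of the `d`-thickening of `K`
is `O(d)`. -/
lemma loc_lemma {K S : Set E4} (hKS : K ⊆ S) (hS : IsSmoothHypersurface S)
    {x₀ : E4} (hx₀ : x₀ ∈ K) :
    ∃ r > (0:ℝ), ∃ C > (0:ℝ), ∀ d : ℝ, 0 < d → d ≤ r →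
      volume (ball x₀ (2*r) ∩ Metric.thickening d K) ≤ ENNReal.ofReal (C * d) := by
  obtain ⟨U, hUopen, hx₀U, f, hfC, hf', hSU⟩ := hS x₀ (hKS hx₀)
  set φ : E4 → (E4 →L[ℝ] ℝ) := fderiv ℝ f with hφdef
  have hdiff : ∀ x ∈ U, DifferentiableAt ℝ f x := fun x hx =>
    (hfC.contDiffAt (hUopen.mem_nhds hx)).differentiableAt (by simp)
  have hderiv : ∀ x ∈ U, HasFDerivAt f (φ x) x := fun x hx => (hdiff x hx).hasFDerivAt
  have hφ0 : φ x₀ ≠ 0 := by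
    have := hf' x₀ hx₀U
    rwa [fderivWithin_of_isOpen hUopen hx₀U] at this
  obtain ⟨u, hu⟩ : ∃ u, 0 < φ x₀ u := by
    obtain ⟨u, hu⟩ := ContinuousLinearMap.exists_ne_zero hφ0
    rcases hu.lt_or_gt with h | h
    · exact ⟨-u, by simpa using h⟩
    · exact ⟨u, h⟩
  have hune : u ≠ 0 := by rintro rfl; simp at hu
  set e : E4 := ‖u‖⁻¹ • u with he
  have hnorm_e : ‖e‖ = 1 := norm_smul_inv_norm hune
  set c : ℝ := φ x₀ e with hc
  have hcpos : 0 < c := by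
    have h1 : φ x₀ e = ‖u‖⁻¹ * φ x₀ u := by
      rw [he, (φ x₀).map_smul, smul_eq_mul]
    rw [hc, h1]
    have := norm_pos_iff.2 hune
    positivity
  set L : ℝ := ‖φ x₀‖ + c with hL
  have hcnorm : c ≤ ‖φ x₀‖ := by
    calc c ≤ |φ x₀ e| := le_abs_self _
    _ = ‖φ x₀ e‖ := rfl
    _ ≤ ‖φ x₀‖ * ‖e‖ := (φ x₀).le_opNorm e
    _ = ‖φ x₀‖ := by rw [hnorm_e, mul_one]
  have hLpos : 0 < L := by have := norm_nonneg (φ x₀); simp only [hL]; linarith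
  have hcL : c ≤ L := by have := norm_nonneg (φ x₀); simp only [hL]; linarith
  -- continuity of the derivative
  have hφcont : ContinuousAt φ x₀ :=
    (hfC.continuousOn_fderiv_of_isOpen hUopen (by simp)).continuousAt (hUopen.mem_nhds hx₀U)
  obtain ⟨δ₁, hδ₁pos, hδ₁⟩ : ∃ δ > (0:ℝ), ∀ x ∈ ball x₀ δ, ‖φ x - φ x₀‖ < c/2 := by
    obtain ⟨δ, hδ, h⟩ := Metric.continuousAt_iff.1 hφcont (c/2) (by positivity)
    exact ⟨δ, hδ, fun x hx => by
      have := h (mem_ball.1 hx)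
      rwa [dist_eq_norm] at this⟩
  obtain ⟨δ₂, hδ₂pos, hδ₂U⟩ := Metric.isOpen_iff.1 hUopen x₀ hx₀U
  set δ : ℝ := min δ₁ δ₂ with hδdef
  have hδpos : 0 < δ := lt_min hδ₁pos hδ₂pos
  have hballU : ball x₀ δ ⊆ U := (ball_subset_ball (min_le_right _ _)).trans hδ₂U
  have hball1 : ∀ x ∈ ball x₀ δ, ‖φ x - φ x₀‖ < c/2 := fun x hx =>
    hδ₁ x (ball_subset_ball (min_le_left _ _) hx)
  have hlow : ∀ x ∈ ball x₀ δ, c/2 ≤ φ x e := by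
    intro x hx
    have h1 : |(φ x - φ x₀) e| ≤ ‖φ x - φ x₀‖ := by
      calc |(φ x - φ x₀) e| = ‖(φ x - φ x₀) e‖ := rfl
      _ ≤ ‖φ x - φ x₀‖ * ‖e‖ := (φ x - φ x₀).le_opNorm e
      _ = ‖φ x - φ x₀‖ := by rw [hnorm_e, mul_one]
    have h2 : φ x e = c + (φ x - φ x₀) e := by
      simp [hc, ContinuousLinearMap.sub_apply]
    have h3 := hball1 x hx
    have h4 := abs_le.1 h1
    linarith [h4.1]
  have hub : ∀ x ∈ ball x₀ δ, ‖φ x‖ ≤ L := by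
    intro x hx
    have h0 : φ x = φ x₀ + (φ x - φ x₀) := by abel
    have h1 : ‖φ x‖ ≤ ‖φ x₀‖ + ‖φ x - φ x₀‖ := by
      conv_lhs => rw [h0]
      exact norm_add_le _ _
    have h2 := hball1 x hx
    simp only [hL]; linarith
  set r : ℝ := δ/8 with hrdef
  have hrpos : 0 < r := by positivity
  -- Lipschitz on ball x₀ δ
  have hlip : ∀ x ∈ ball x₀ δ, ∀ y ∈ ball x₀ δ, ‖f y - f x‖ ≤ L * ‖y - x‖ := fun x hx y hy =>
    Convex.norm_image_sub_le_of_norm_fderiv_le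
      (fun z hz => hdiff z (hballU hz)) (fun z hz => hub z hz) (convex_ball x₀ δ) hx hy
  set rout : ℝ := (c/(8*L)) * r with hroutdef
  have hroutpos : 0 < rout := by positivity
  have hroutr : rout ≤ r := by
    have h1 : c/(8*L) ≤ 1 := by
      rw [div_le_one (by positivity)]; linarith
    calc rout = (c/(8*L)) * r := rfl
    _ ≤ 1 * r := mul_le_mul_of_nonneg_right h1 hrpos.le
    _ = r := one_mul r
  -- finite volume of the big ball
  have hVfin : volume (closedBall x₀ (4*r)) < ⊤ :=
    (isCompact_closedBall x₀ (4*r)).measure_lt_top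
  set VR : ℝ := (volume (closedBall x₀ (4*r))).toReal with hVRdef
  have hVR0 : 0 ≤ VR := ENNReal.toReal_nonneg
  refine ⟨rout, hroutpos, VR*8*L/(c*r) + 1, by positivity, ?_⟩
  intro d hd hdr
  -- the slab
  set A : Set E4 := ball x₀ (2*r) ∩ f ⁻¹' (Ioo (-(L*d)) (L*d)) with hAdef
  have hball2U : ball x₀ (2*r) ⊆ ball x₀ δ := ball_subset_ball (by rw [hrdef]; linarith)
  have hAopen : IsOpen A :=
    ContinuousOn.isOpen_inter_preimage (hfC.continuousOn.mono (hball2U.trans hballU))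
      isOpen_ball isOpen_Ioo
  -- the thickened set near x₀ is inside the slab
  have hsub : ball x₀ (2*rout) ∩ Metric.thickening d K ⊆ A := by
    rintro x ⟨hx1, hx2⟩
    obtain ⟨k, hkK, hdk⟩ := mem_thickening_iff.1 hx2
    have hx1' : dist x x₀ < 2*rout := mem_ball.1 hx1
    have hxball : x ∈ ball x₀ (2*r) := mem_ball.2 (by linarith)
    have hkball : k ∈ ball x₀ δ := by
      rw [mem_ball]
      calc dist k x₀ ≤ dist k x + dist x x₀ := dist_triangle _ _ _
      _ < d + 2*rout := by rw [dist_comm k x]; linarith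
      _ ≤ 3*rout := by linarith
      _ ≤ 3*r := by linarith
      _ < δ := by rw [hrdef]; linarith
    have hfk : f k = 0 := by
      have hmem : k ∈ S ∩ U := ⟨hKS hkK, hballU hkball⟩
      rw [hSU] at hmem
      exact hmem.2
    have hfx : |f x| < L * d := by
      have h1 := hlip k hkball x (hball2U hxball)
      rw [hfk, sub_zero] at h1
      have h2 : ‖x - k‖ = dist x k := (dist_eq_norm x k).symm
      have h3 : |f x| ≤ L * dist x k := by rw [← h2]; exact h1
      have h4 := mul_lt_mul_of_pos_left hdk hLpos
      linarith
    have h5 := abs_lt.1 hfx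
    exact ⟨hxball, mem_preimage.2 (mem_Ioo.2 ⟨h5.1, h5.2⟩)⟩
  -- translation step
  set s₀ : ℝ := 8*L*d/c with hs₀def
  have hs₀pos : 0 < s₀ := by positivity
  have hs₀r : s₀ ≤ r := by
    have h0 : d ≤ (c/(8*L)) * r := hdr
    have h1 : (8*L) * ((c/(8*L)) * r) = c * r := by field_simp
    have h2 : 8*L*d ≤ c*r := by
      calc 8*L*d = (8*L)*d := by ring
      _ ≤ (8*L)*((c/(8*L)) * r) := mul_le_mul_of_nonneg_left h0 (by positivity)
      _ = c*r := h1
    rw [hs₀def, div_le_iff₀ hcpos]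
    linarith
  -- key monotonicity claim
  have hkey : ∀ x ∈ A, ∀ m : ℝ, s₀ ≤ m → m ≤ 2*r → x + m • e ∉ A := by
    rintro x ⟨hxb, hxf⟩ m hm1 hm2 ⟨hyb, hyf⟩
    have hmpos : 0 < m := lt_of_lt_of_le hs₀pos hm1
    have hseg : ∀ τ ∈ Icc (0:ℝ) m, x + τ • e ∈ ball x₀ δ := by
      intro τ hτ
      have hxb' := mem_ball.1 hxb
      have h1 : |τ| ≤ m := abs_le.2 ⟨by linarith [hτ.1], hτ.2⟩
      rw [mem_ball]
      calc dist (x + τ • e) x₀ ≤ dist (x + τ • e) x + dist x x₀ := dist_triangle _ _ _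
      _ = ‖τ • e‖ + dist x x₀ := by rw [dist_eq_norm, add_sub_cancel_left]
      _ = |τ| + dist x x₀ := by rw [norm_smul, hnorm_e, mul_one, Real.norm_eq_abs]
      _ < 2*r + 2*r := by linarith
      _ < δ := by rw [hrdef]; linarith
    set g : ℝ → ℝ := fun τ => f (x + τ • e) with hgdef
    have hg : ∀ τ ∈ Icc (0:ℝ) m, HasDerivAt g (φ (x + τ • e) e) τ := by
      intro τ hτ
      have h1 : HasDerivAt (fun τ : ℝ => x + τ • e) e τ := by
        have h2 := ((hasDerivAt_id τ).smul_const e).const_add x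
        simpa using h2
      exact (hderiv _ (hballU (hseg τ hτ))).comp_hasDerivAt τ h1
    obtain ⟨t, ht, hslope⟩ := exists_hasDerivAt_eq_slope g (fun τ => φ (x + τ • e) e) hmpos
      (fun τ hτ => (hg τ hτ).continuousAt.continuousWithinAt)
      (fun τ hτ => hg τ (Ioo_subset_Icc_self hτ))
    have hlow' : c/2 ≤ φ (x + t • e) e := hlow _ (hseg t (Ioo_subset_Icc_self ht))
    rw [hslope] at hlow'
    have hg0a : -(L*d) < g 0 := by
      have : g 0 = f x := by simp [hgdef]
      rw [this]; exact hxf.1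
    have hg0b : g 0 < L*d := by
      have : g 0 = f x := by simp [hgdef]
      rw [this]; exact hxf.2
    have hgma : g m < L*d := hyf.2
    have hgmb : -(L*d) < g m := hyf.1
    have h5 : c/2 * m ≤ g m - g 0 := by
      rw [sub_zero] at hlow'
      have := (le_div_iff₀ hmpos).1 hlow'
      linarith
    have h6 : g m - g 0 < 2*(L*d) := by linarith
    have h8 : c/2*s₀ ≤ c/2*m := mul_le_mul_of_nonneg_left hm1 (by positivity)
    have h9 : c/2*s₀ = 4*(L*d) := by rw [hs₀def]; field_simp; ring
    have h10 : 0 < L*d := by positivity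
    have h11 : 4*(L*d) ≤ g m - g 0 := by
      calc 4*(L*d) = c/2*s₀ := h9.symm
      _ ≤ c/2*m := h8
      _ ≤ g m - g 0 := h5
    linarith [h6, h10, h11]
  -- disjoint translates
  set gvec : ℕ → E4 := fun k => (-((k:ℝ)*s₀)) • e with hgvecdef
  set Ak : ℕ → Set E4 := fun k => (fun y => y + gvec k) ⁻¹' A with hAkdef
  set N : ℕ := ⌊r/s₀⌋₊ + 1 with hNdef
  have hNgt : r/s₀ < (N:ℝ) := by rw [hNdef]; push_cast; exact Nat.lt_floor_add_one _
  have hNs₀ : (N:ℝ) * s₀ ≤ 2*r := by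
    have h1 : (N:ℝ) ≤ r/s₀ + 1 := by
      rw [hNdef]; push_cast
      linarith [Nat.floor_le (by positivity : (0:ℝ) ≤ r/s₀)]
    have h2 : (r/s₀)*s₀ = r := div_mul_cancel₀ r hs₀pos.ne'
    calc (N:ℝ)*s₀ ≤ (r/s₀+1)*s₀ := mul_le_mul_of_nonneg_right h1 hs₀pos.le
    _ = r + s₀ := by rw [add_mul, h2, one_mul]
    _ ≤ 2*r := by linarith
  have hAkvol : ∀ k, volume (Ak k) = volume A := fun k =>
    measure_preimage_add_right volume (gvec k) A
  have hAkopen : ∀ k, IsOpen (Ak k) := fun k => hAopen.preimage (continuous_add_right _)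
  have hAksub : ∀ k < N, Ak k ⊆ ball x₀ (4*r) := by
    intro k hk z hz
    have h1 : z + gvec k ∈ A := hz
    have h2 : dist (z + gvec k) x₀ < 2*r := mem_ball.1 h1.1
    have h3 : dist z (z + gvec k) = (k:ℝ)*s₀ := by
      have h4 : z - (z + gvec k) = ((k:ℝ)*s₀) • e := by
        rw [hgvecdef]; simp only [neg_smul]; abel
      rw [dist_eq_norm, h4, norm_smul, hnorm_e, mul_one, Real.norm_eq_abs,
        abs_of_nonneg (by positivity : (0:ℝ) ≤ (k:ℝ)*s₀)]
    have h4 : (k:ℝ)*s₀ ≤ (N:ℝ)*s₀ :=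
      mul_le_mul_of_nonneg_right (by exact_mod_cast hk.le) hs₀pos.le
    rw [mem_ball]
    calc dist z x₀ ≤ dist z (z + gvec k) + dist (z + gvec k) x₀ := dist_triangle _ _ _
    _ < (k:ℝ)*s₀ + 2*r := by rw [h3]; linarith
    _ ≤ 4*r := by linarith
  have hdisj : (↑(Finset.range N) : Set ℕ).PairwiseDisjoint Ak := by
    have key2 : ∀ j k : ℕ, j < k → k < N → Disjoint (Ak j) (Ak k) := by
      intro j k hjk hkN
      rw [Set.disjoint_left]
      intro z hzj hzk
      set m : ℝ := ((k:ℝ) - j) * s₀ with hmdef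
      have hx₂ : z + gvec k ∈ A := hzk
      have hx₁ : z + gvec j ∈ A := hzj
      have heq : (z + gvec k) + m • e = z + gvec j := by
        rw [hgvecdef, hmdef]
        simp only [add_assoc, ← add_smul]
        congr 2
        ring
      have hm1 : s₀ ≤ m := by
        have h1 : (1:ℝ) ≤ (k:ℝ) - j := by
          have : (j:ℝ) + 1 ≤ k := by exact_mod_cast hjk
          linarith
        calc s₀ = 1 * s₀ := (one_mul _).symm
        _ ≤ ((k:ℝ) - j) * s₀ := mul_le_mul_of_nonneg_right h1 hs₀pos.le
      have hm2 : m ≤ 2*r := by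
        have hk : (k:ℝ) ≤ N := by exact_mod_cast hkN.le
        have hj0 : (0:ℝ) ≤ (j:ℝ) := Nat.cast_nonneg j
        have h1 : m ≤ (N:ℝ)*s₀ :=
          mul_le_mul_of_nonneg_right (by linarith : (k:ℝ) - j ≤ (N:ℝ)) hs₀pos.le
        linarith
      exact hkey _ hx₂ m hm1 hm2 (by rw [heq]; exact hx₁)
    intro a ha b hb hab
    rcases hab.lt_or_gt with h | h
    · exact key2 a b h (Finset.mem_range.1 (by exact_mod_cast hb))
    · exact (key2 b a h (Finset.mem_range.1 (by exact_mod_cast ha))).symm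
  have hsumN : ∑ k ∈ Finset.range N, volume (Ak k) = (N:ENNReal) * volume A := by
    rw [Finset.sum_congr rfl (fun k _ => hAkvol k)]
    simp [Finset.sum_const, Finset.card_range, nsmul_eq_mul]
  have hUb : (N:ENNReal) * volume A ≤ volume (closedBall x₀ (4*r)) := by
    rw [← hsumN, ← measure_biUnion_finset hdisj (fun k _ => (hAkopen k).measurableSet)]
    exact measure_mono (iUnion₂_subset fun k hk =>
      (hAksub k (Finset.mem_range.1 hk)).trans ball_subset_closedBall)
  have hAsub : A ⊆ closedBall x₀ (4*r) :=
    inter_subset_left.trans ((ball_subset_ball (by linarith)).trans ball_subset_closedBall)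
  have hAfin : volume A ≠ ⊤ := ((measure_mono hAsub).trans_lt hVfin).ne
  set vA : ℝ := (volume A).toReal with hvAdef
  have hvA0 : 0 ≤ vA := ENNReal.toReal_nonneg
  have hNvA : (N:ℝ) * vA ≤ VR := by
    have h1 := ENNReal.toReal_mono hVfin.ne hUb
    rw [ENNReal.toReal_mul, ENNReal.toReal_natCast] at h1
    rw [hvAdef, hVRdef]
    exact h1
  have harith : vA ≤ (VR*8*L/(c*r) + 1) * d := by
    have h2 : vA * (r/s₀) ≤ VR := by
      calc vA * (r/s₀) ≤ vA * N := mul_le_mul_of_nonneg_left hNgt.le hvA0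
      _ = (N:ℝ) * vA := mul_comm _ _
      _ ≤ VR := hNvA
    have h4 : vA * r ≤ VR * s₀ := by
      have h5 := mul_le_mul_of_nonneg_right h2 hs₀pos.le
      have h6 : vA * (r/s₀) * s₀ = vA * r := by field_simp
      linarith
    have h7 : VR * s₀ = (VR*8*L/(c*r)) * d * r := by
      rw [hs₀def]; field_simp
    have h9 : vA ≤ (VR*8*L/(c*r)) * d := le_of_mul_le_mul_right (by linarith) hrpos
    have h10 : (VR*8*L/(c*r)) * d + 0 ≤ (VR*8*L/(c*r)) * d + d := by linarith
    calc vA ≤ (VR*8*L/(c*r)) * d := h9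
    _ ≤ (VR*8*L/(c*r)) * d + d := by linarith
    _ = (VR*8*L/(c*r) + 1) * d := by ring
  calc volume (ball x₀ (2*rout) ∩ Metric.thickening d K) ≤ volume A := measure_mono hsub
  _ = ENNReal.ofReal vA := (ENNReal.ofReal_toReal hAfin).symm
  _ ≤ ENNReal.ofReal ((VR*8*L/(c*r) + 1) * d) := ENNReal.ofReal_le_ofReal harith

/-- Compact pieces of hypersurfaces have `O(d)` thickenings. -/
lemma cpt_lemma {K S : Set E4} (hK : IsCompact K) (hKS : K ⊆ S)
    (hS : IsSmoothHypersurface S) :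
    ∃ C > (0:ℝ), ∃ r > (0:ℝ), ∀ d : ℝ, 0 < d → d ≤ r →
      volume (Metric.thickening d K) ≤ ENNReal.ofReal (C * d) := by
  rcases K.eq_empty_or_nonempty with rfl | hne
  · exact ⟨1, one_pos, 1, one_pos, fun d hd _ => by simp [Metric.thickening_empty]⟩
  choose! r hrpos C hCpos hmain using fun x (hx : x ∈ K) => loc_lemma hKS hS hx
  obtain ⟨t, htK, htcov⟩ := hK.elim_nhds_subcover (fun x => ball x (r x))
    (fun x hx => ball_mem_nhds x (hrpos x hx))
  have htne : t.Nonempty := by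
    obtain ⟨y, hy⟩ := hne
    obtain ⟨x, hx, -⟩ := mem_iUnion₂.1 (htcov hy)
    exact ⟨x, hx⟩
  set d₀ : ℝ := t.inf' htne r with hd₀def
  have hd₀pos : 0 < d₀ := (Finset.lt_inf'_iff htne).2 fun x hx => hrpos x (htK x hx)
  set Ct : ℝ := ∑ x ∈ t, C x with hCtdef
  have hCtpos : 0 < Ct := Finset.sum_pos (fun x hx => hCpos x (htK x hx)) htne
  refine ⟨Ct, hCtpos, d₀, hd₀pos, fun d hd hdd₀ => ?_⟩
  have hsub : Metric.thickening d K ⊆ ⋃ x ∈ t, (ball x (2 * r x) ∩ Metric.thickening d K) := by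
    intro z hz
    obtain ⟨k, hkK, hdk⟩ := mem_thickening_iff.1 hz
    obtain ⟨x, hx, hkx⟩ := mem_iUnion₂.1 (htcov hkK)
    refine mem_iUnion₂.2 ⟨x, hx, ?_, hz⟩
    rw [mem_ball] at hkx ⊢
    have h1 : d₀ ≤ r x := Finset.inf'_le r hx
    calc dist z x ≤ dist z k + dist k x := dist_triangle _ _ _
    _ < d + r x := by linarith [dist_comm z k ▸ hdk]
    _ ≤ 2 * r x := by linarith
  calc volume (Metric.thickening d K)
      ≤ ∑ x ∈ t, volume (ball x (2*r x) ∩ Metric.thickening d K) :=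
      le_trans (measure_mono hsub) (measure_biUnion_finset_le t _)
    _ ≤ ∑ x ∈ t, ENNReal.ofReal (C x * d) := Finset.sum_le_sum fun x hx =>
      hmain x (htK x hx) d hd (le_trans hdd₀ (Finset.inf'_le r hx))
    _ = ENNReal.ofReal (∑ x ∈ t, C x * d) := (ENNReal.ofReal_sum_of_nonneg fun x hx =>
      mul_nonneg (hCpos x (htK x hx)).le hd.le).symm
    _ = ENNReal.ofReal (Ct * d) := by rw [hCtdef, Finset.sum_mul]

/-- If `X ⊂ ℝ⁴` is a bounded open set whose boundary is a finite union of
compact subsets of smooth codimension-1 submanifolds of ℝ⁴, then there is `C > 0` with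
`vol {x ∈ X : dist(x, ∂X) < d} ≤ C·d` for all `d > 0`. -/
theorem stmt_2 (X : Set (EuclideanSpace ℝ (Fin 4)))
    (hXopen : IsOpen X) (hXbdd : Bornology.IsBounded X)
    (ι : Type) (hι : Finite ι) (K S : ι → Set (EuclideanSpace ℝ (Fin 4)))
    (hbdry : frontier X = ⋃ i, K i)
    (hKcpt : ∀ i, IsCompact (K i))
    (hKS : ∀ i, K i ⊆ S i)
    (hS : ∀ i, IsSmoothHypersurface (S i)) :
    ∃ C > (0:ℝ), ∀ d > (0:ℝ),
      volume {x ∈ X | Metric.infDist x (frontier X) < d} ≤ ENNReal.ofReal (C * d) := by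
  classical
  by_cases hXe : X = ∅
  · exact ⟨1, one_pos, fun d hd => by simp [hXe]⟩
  have hfr_ne : (frontier X).Nonempty := by
    rw [nonempty_iff_ne_empty]
    intro h
    rcases frontier_eq_empty_iff.1 h with h1 | h1
    · exact hXe h1
    · exact NormedSpace.unbounded_univ ℝ (EuclideanSpace ℝ (Fin 4)) (h1 ▸ hXbdd)
  have : Fintype ι := Fintype.ofFinite ι
  have hι_ne : Nonempty ι := by
    obtain ⟨y, hy⟩ := hfr_ne
    rw [hbdry] at hy
    obtain ⟨i, -⟩ := mem_iUnion.1 hy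
    exact ⟨i⟩
  choose C hCpos r hrpos hmain using fun i => cpt_lemma (hKcpt i) (hKS i) (hS i)
  set d₀ : ℝ := Finset.univ.inf' Finset.univ_nonempty r with hd₀def
  have hd₀pos : 0 < d₀ := (Finset.lt_inf'_iff Finset.univ_nonempty).2 fun i _ => hrpos i
  set Ct : ℝ := ∑ i, C i with hCtdef
  have hCtnn : 0 ≤ Ct := Finset.sum_nonneg fun i _ => (hCpos i).le
  have hXfin : volume X ≠ ⊤ := by
    obtain ⟨R, hR⟩ := hXbdd.subset_closedBall 0
    exact ((measure_mono hR).trans_lt (isCompact_closedBall _ _).measure_lt_top).ne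
  set VX : ℝ := (volume X).toReal with hVXdef
  have hVX0 : 0 ≤ VX := ENNReal.toReal_nonneg
  refine ⟨Ct + VX/d₀ + 1, by positivity, fun d hd => ?_⟩
  by_cases hdd : d ≤ d₀
  · have hsubset : {x ∈ X | Metric.infDist x (frontier X) < d}
        ⊆ Metric.thickening d (frontier X) := by
      rintro x ⟨-, hx2⟩
      obtain ⟨y, hy, hdy⟩ := (Metric.infDist_lt_iff hfr_ne).1 hx2
      exact mem_thickening_iff.2 ⟨y, hy, hdy⟩
    have hsubset2 : Metric.thickening d (frontier X) ⊆ ⋃ i, Metric.thickening d (K i) := by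
      intro z hz
      obtain ⟨y, hy, hdy⟩ := mem_thickening_iff.1 hz
      rw [hbdry] at hy
      obtain ⟨i, hi⟩ := mem_iUnion.1 hy
      exact mem_iUnion.2 ⟨i, mem_thickening_iff.2 ⟨y, hi, hdy⟩⟩
    calc volume {x ∈ X | Metric.infDist x (frontier X) < d}
        ≤ volume (⋃ i, Metric.thickening d (K i)) := measure_mono (hsubset.trans hsubset2)
      _ ≤ ∑' i, volume (Metric.thickening d (K i)) := measure_iUnion_le _
      _ = ∑ i, volume (Metric.thickening d (K i)) := tsum_fintype _
      _ ≤ ∑ i, ENNReal.ofReal (C i * d) := Finset.sum_le_sum fun i _ =>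
          hmain i d hd (le_trans hdd (Finset.inf'_le r (Finset.mem_univ i)))
      _ = ENNReal.ofReal (∑ i, C i * d) := (ENNReal.ofReal_sum_of_nonneg fun i _ =>
          mul_nonneg (hCpos i).le hd.le).symm
      _ = ENNReal.ofReal (Ct * d) := by rw [hCtdef, Finset.sum_mul]
      _ ≤ ENNReal.ofReal ((Ct + VX/d₀ + 1) * d) := ENNReal.ofReal_le_ofReal (by
          have h2 : 0 ≤ (VX/d₀) * d := mul_nonneg (div_nonneg hVX0 hd₀pos.le) hd.le
          have h3 : (Ct + VX/d₀ + 1) * d = Ct*d + (VX/d₀)*d + d := by ring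
          linarith)
  · push_neg at hdd
    calc volume {x ∈ X | Metric.infDist x (frontier X) < d} ≤ volume X :=
        measure_mono (sep_subset _ _)
      _ = ENNReal.ofReal VX := (ENNReal.ofReal_toReal hXfin).symm
      _ ≤ ENNReal.ofReal ((Ct + VX/d₀ + 1) * d) := ENNReal.ofReal_le_ofReal (by
          have h1 : VX/d₀ * d₀ = VX := div_mul_cancel₀ VX hd₀pos.ne'
          have h2 : (VX/d₀) * d₀ ≤ (VX/d₀) * d :=
            mul_le_mul_of_nonneg_left hdd.le (div_nonneg hVX0 hd₀pos.le)
          have h3 : 0 ≤ Ct * d := mul_nonneg hCtnn hd.le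
          have h4 : (Ct + VX/d₀ + 1) * d = Ct*d + (VX/d₀)*d + d := by ring
          linarith)
end

section
/- Let f : [0,∞) → (0,1] be convex and nonincreasing with asymptotic decay rate p where 1 < p ≤ 2, i.e. lim_{x→∞} ln f(x)/ln x = -p. Then for every ε > 0 and all sufficiently large natural numbers n, |f'(n^{1/(p+1)+ε})| ≤ 1/n (where f' denotes any subderivative of the convex function f, or the derivative assuming f is differentiable). -/
open Real Filter Set

/-- Let `f : [0,∞) → (0,1]` be a differentiable convex nonincreasing
function with asymptotic decay rate `p ∈ (1,2]`, i.e. `lim_{x→∞} ln f(x)/ln x = -p`.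
Then for every `ε > 0` and all sufficiently large `n : ℕ`,
`|f'(n^{1/(p+1)+ε})| ≤ 1/n`. -/
theorem stmt_6 (p : ℝ) (hp : 1 < p) (hp2 : p ≤ 2) (f : ℝ → ℝ)
    (hdiff : ∀ x ≥ (0:ℝ), DifferentiableAt ℝ f x)
    (hconv : ConvexOn ℝ (Set.Ici 0) f)
    (hanti : AntitoneOn f (Set.Ici 0))
    (hrange : ∀ x ≥ (0:ℝ), 0 < f x ∧ f x ≤ 1)
    (hdecay : Filter.Tendsto (fun x : ℝ => Real.log (f x) / Real.log x)
      Filter.atTop (nhds (-p))) :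
    ∀ ε > (0:ℝ), ∀ᶠ n : ℕ in Filter.atTop,
      |deriv f ((n : ℝ) ^ (1 / (p + 1) + ε))| ≤ 1 / (n : ℝ) := by
  intro ε hε
  have hp1 : (0:ℝ) < p + 1 := by linarith
  set α := 1 / (p + 1) + ε with hαdef
  have hαpos : 0 < α := by positivity
  set δ := min 1 ε with hδdef
  have hδpos : 0 < δ := lt_min one_pos hε
  have hδ1 : δ ≤ 1 := min_le_left _ _
  have hδε : δ ≤ ε := min_le_right _ _
  set β := α * (p + 1 - δ) - 1 with hβdef
  have hβ : ε / 2 ≤ β := by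
    have hexp : α * (p + 1 - δ) = 1 - δ / (p + 1) + ε * (p + 1) - ε * δ := by
      rw [hαdef]; field_simp; ring
    have h1 : δ / (p + 1) ≤ ε / 2 := by
      rw [div_le_iff₀ hp1]; nlinarith
    have h2 : ε * δ ≤ ε := by nlinarith
    have h3 : 2 * ε ≤ ε * (p + 1) := by nlinarith
    rw [hβdef, hexp]; linarith
  have hβpos : 0 < β := by linarith
  -- eventual upper bound on f
  have hlog : ∀ᶠ x in atTop, Real.log (f x) / Real.log x ≤ -p + δ :=
    hdecay.eventually (eventually_le_nhds (by linarith))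
  have hfb : ∀ᶠ x in atTop, f x ≤ x ^ (δ - p) := by
    filter_upwards [hlog, eventually_gt_atTop (1:ℝ)] with x hx hx1
    have hlx : 0 < Real.log x := Real.log_pos hx1
    have hx0 : (0:ℝ) < x := by linarith
    have hfx := (hrange x hx0.le).1
    have hle : Real.log (f x) ≤ (δ - p) * Real.log x := by
      have := (div_le_iff₀ hlx).mp hx
      linarith
    calc f x = Real.exp (Real.log (f x)) := (Real.exp_log hfx).symm
      _ ≤ Real.exp ((δ - p) * Real.log x) := Real.exp_le_exp.mpr hle
      _ = x ^ (δ - p) := by rw [Real.rpow_def_of_pos hx0, mul_comm]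
  -- pull back along n ↦ n^α / 2
  have htN : Tendsto (fun n : ℕ => (n:ℝ) ^ α) atTop atTop :=
    (tendsto_rpow_atTop hαpos).comp tendsto_natCast_atTop_atTop
  have htx : Tendsto (fun n : ℕ => (n:ℝ) ^ α / 2) atTop atTop :=
    htN.atTop_div_const two_pos
  have htε : Tendsto (fun n : ℕ => (n:ℝ) ^ (ε/2)) atTop atTop :=
    (tendsto_rpow_atTop (by linarith)).comp tendsto_natCast_atTop_atTop
  filter_upwards [htx.eventually hfb, htε.eventually (eventually_ge_atTop (8:ℝ)),
      eventually_ge_atTop 1] with n H1 H2 H3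
  have hn1 : (1:ℝ) ≤ (n:ℝ) := by exact_mod_cast H3
  have hn0 : (0:ℝ) < (n:ℝ) := by linarith
  set y := (n:ℝ) ^ α with hydef
  set x := y / 2 with hxdef
  have hy1 : (1:ℝ) ≤ y := Real.one_le_rpow hn1 hαpos.le
  have hy0 : (0:ℝ) < y := by linarith
  have hx0 : (0:ℝ) < x := by rw [hxdef]; linarith
  have hxI : x ∈ Set.Ici (0:ℝ) := hx0.le
  have hyI : y ∈ Set.Ici (0:ℝ) := hy0.le
  have hxy : x < y := by rw [hxdef]; linarith
  have hfy0 := (hrange y hy0.le).1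
  have hfx0 := (hrange x hx0.le).1
  -- deriv f y ≤ 0
  have hd0 : deriv f y ≤ 0 := by
    have hy1I : y + 1 ∈ Set.Ici (0:ℝ) := by simp [Set.mem_Ici]; linarith
    have hs := hconv.deriv_le_slope hyI hy1I (by linarith) (hdiff y hy0.le)
    have hmono : f (y + 1) ≤ f y := hanti hyI hy1I (by linarith)
    rw [slope_def_field, show y + 1 - y = 1 by ring, div_one] at hs
    linarith
  -- |deriv f y| ≤ 2 * f x / y
  have habs : |deriv f y| ≤ 2 * f x / y := by
    rw [abs_of_nonpos hd0, le_div_iff₀ hy0]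
    have hs := hconv.slope_le_deriv hxI hyI hxy (hdiff y hy0.le)
    rw [slope_def_field] at hs
    have hyx : y - x = y / 2 := by rw [hxdef]; ring
    have hs2 := (div_le_iff₀ (by linarith : (0:ℝ) < y - x)).mp hs
    rw [hyx] at hs2
    nlinarith
  -- f x ≤ x ^ (δ - p) ≤ 4 * y ^ (δ - p)
  have hfxb : f x ≤ x ^ (δ - p) := H1
  have hxpow : x ^ (δ - p) ≤ 4 * y ^ (δ - p) := by
    rw [hxdef, div_rpow hy0.le (by norm_num : (0:ℝ) ≤ 2)]
    have h14 : (1/4 : ℝ) ≤ (2:ℝ) ^ (δ - p) := by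
      have : (2:ℝ) ^ (-2:ℝ) ≤ (2:ℝ) ^ (δ - p) :=
        Real.rpow_le_rpow_of_exponent_le (by norm_num) (by linarith)
      calc (1/4 : ℝ) = (2:ℝ) ^ (-2:ℝ) := by
            rw [show (-2:ℝ) = ((-2:ℤ):ℝ) by norm_num, Real.rpow_intCast]; norm_num
        _ ≤ _ := this
    have hyp0 : (0:ℝ) ≤ y ^ (δ - p) := (Real.rpow_pos_of_pos hy0 _).le
    calc y ^ (δ - p) / (2:ℝ) ^ (δ - p) ≤ y ^ (δ - p) / (1/4) :=
          div_le_div_of_nonneg_left hyp0 (by norm_num) h14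
      _ = 4 * y ^ (δ - p) := by ring
  -- combine powers
  have hychain : 2 * f x / y ≤ 8 * y ^ (δ - p - 1) := by
    have hstep : 2 * f x / y ≤ 8 * y ^ (δ - p) / y := by
      apply div_le_div_of_nonneg_right ?_ hy0.le
      nlinarith
    have : y ^ (δ - p) / y = y ^ (δ - p - 1) := by
      rw [show δ - p - 1 = (δ - p) + (-1) by ring, Real.rpow_add hy0, Real.rpow_neg_one,
        div_eq_mul_inv]
    calc 2 * f x / y ≤ 8 * y ^ (δ - p) / y := hstep
      _ = 8 * (y ^ (δ - p) / y) := by ring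
      _ = 8 * y ^ (δ - p - 1) := by rw [this]
  -- y ^ (δ - p - 1) = n ^ (-(1+β))
  have hto : y ^ (δ - p - 1) = (n:ℝ) ^ (-(1 + β)) := by
    rw [hydef, ← Real.rpow_mul (Nat.cast_nonneg n)]
    congr 1
    rw [hβdef]; ring
  have hfinal : 8 * (n:ℝ) ^ (-(1 + β)) ≤ 1 / (n:ℝ) := by
    have hnb : (8:ℝ) ≤ (n:ℝ) ^ β :=
      H2.trans (Real.rpow_le_rpow_of_exponent_le hn1 hβ)
    have hnbpos : (0:ℝ) < (n:ℝ) ^ β := Real.rpow_pos_of_pos hn0 _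
    have hsplit : (n:ℝ) ^ (-(1 + β)) = ((n:ℝ)⁻¹) * ((n:ℝ) ^ β)⁻¹ := by
      rw [show -(1+β) = (-1) + (-β) by ring, Real.rpow_add hn0, Real.rpow_neg_one,
        Real.rpow_neg hn0.le]
    rw [hsplit, one_div]
    have h8 : 8 * ((n:ℝ) ^ β)⁻¹ ≤ 1 := by
      calc 8 * ((n:ℝ) ^ β)⁻¹ ≤ (n:ℝ)^β * ((n:ℝ)^β)⁻¹ := by
            apply mul_le_mul_of_nonneg_right hnb (by positivity)
        _ = 1 := mul_inv_cancel₀ hnbpos.ne'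
    calc 8 * ((n:ℝ)⁻¹ * ((n:ℝ)^β)⁻¹) = (8 * ((n:ℝ)^β)⁻¹) * (n:ℝ)⁻¹ := by ring
      _ ≤ 1 * (n:ℝ)⁻¹ := by
          apply mul_le_mul_of_nonneg_right h8 (by positivity)
      _ = (n:ℝ)⁻¹ := one_mul _
  calc |deriv f y| ≤ 2 * f x / y := habs
    _ ≤ 8 * y ^ (δ - p - 1) := hychain
    _ = 8 * (n:ℝ) ^ (-(1+β)) := by rw [hto]
    _ ≤ 1 / (n:ℝ) := hfinal
end

section
/- Let f(x) = (1+x)^{-p} with 1 < p ≤ 2, and for d > 0 define W_d to be the region in the first quadrant {(r,s) : 0 ≤ s ≤ f(r)} minus the region {(r,s) : 0 ≤ s ≤ g(r)} where g(r) = π · max(0, √(f(r)/π) − d)². Then for every ε > 0 there is a constant C such that the area of W_d is at most C · d^{2 − 2/p − ε} for all sufficiently small d > 0. (The same bound holds for any convex nonincreasing f with decay rate p.) -/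
open Real Filter Set MeasureTheory

lemma shift_int (q : ℝ) (hq : q < -1) (R : ℝ) (hR : 0 ≤ R) :
    IntegrableOn (fun x => (1+x) ^ q) (Ioi R) ∧
      ∫ x in Ioi R, (1+x) ^ q = -(1+R) ^ (q+1) / (q+1) := by
  have h1R : (0:ℝ) < 1 + R := by linarith
  have hmp : MeasurePreserving (fun x : ℝ => 1 + x) volume volume :=
    measurePreserving_add_left volume 1
  have hemb : MeasurableEmbedding (fun x : ℝ => 1 + x) :=
    (MeasurableEquiv.addLeft (1:ℝ)).measurableEmbedding
  have hpre : (fun x : ℝ => 1 + x) ⁻¹' (Ioi (1+R)) = Ioi R := by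
    ext x; simp [Set.mem_Ioi]
  constructor
  · have := integrableOn_Ioi_rpow_of_lt hq h1R
    have h2 := (hmp.restrict_preimage_emb hemb (Ioi (1+R))).integrable_comp_emb hemb
      (g := fun x : ℝ => x ^ q)
    rw [hpre] at h2
    exact (h2.2 this)
  · have := hmp.setIntegral_preimage_emb hemb (fun x : ℝ => x ^ q) (Ioi (1+R))
    rw [hpre] at this
    rw [this, integral_Ioi_rpow_of_lt hq h1R]

lemma ptwise (d : ℝ) (hd : 0 < d) (F : ℝ) (hF : 0 ≤ F) :
    F - π * (max 0 (Real.sqrt (F / π) - d))^2 ≤ 2 * d * Real.sqrt π * Real.sqrt F := by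
  have hπ := pi_pos
  have hsπ : Real.sqrt π * Real.sqrt π = π := Real.mul_self_sqrt hπ.le
  have hsπ0 : (0:ℝ) < Real.sqrt π := Real.sqrt_pos.mpr hπ
  have hsF : Real.sqrt F * Real.sqrt F = F := Real.mul_self_sqrt hF
  have hsF0 : 0 ≤ Real.sqrt F := Real.sqrt_nonneg F
  have hdiv : Real.sqrt (F / π) = Real.sqrt F / Real.sqrt π := Real.sqrt_div hF π
  set t := Real.sqrt (F / π) with ht
  have ht0 : 0 ≤ t := Real.sqrt_nonneg _
  have htπ : t * Real.sqrt π = Real.sqrt F := by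
    rw [hdiv]; field_simp
  have ht2 : π * (t * t) = F := by
    have : t * t = F / π := Real.mul_self_sqrt (div_nonneg hF hπ.le)
    rw [this]; field_simp
  rcases le_or_gt t d with h | h
  · rw [max_eq_left (by linarith)]
    nlinarith [mul_nonneg hd.le hsF0, mul_nonneg hsπ0.le hsF0]
  · rw [max_eq_right (by linarith)]
    have hπt : π * t = Real.sqrt π * Real.sqrt F := by
      rw [hdiv]; field_simp; nlinarith [hsπ]
    nlinarith [mul_pos hπ (mul_pos hd hd)]

lemma ptwise2 (d F : ℝ) (hd : 0 ≤ d) (hF : 0 ≤ F) :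
    π * (max 0 (Real.sqrt (F / π) - d))^2 ≤ F := by
  have hπ := pi_pos
  set t := Real.sqrt (F / π) with ht
  have ht0 : 0 ≤ t := Real.sqrt_nonneg _
  have ht2 : π * (t * t) = F := by
    have : t * t = F / π := Real.mul_self_sqrt (div_nonneg hF hπ.le)
    rw [this]; field_simp
  have hm : max 0 (t - d) ≤ t ∨ max 0 (t-d) = 0 := by
    rcases le_or_gt (t - d) 0 with h | h
    · right; exact max_eq_left h
    · left; exact max_le ht0 (by linarith)
  have hm0 : 0 ≤ max 0 (t - d) := le_max_left _ _
  rcases hm with h | h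
  · have h2 : (max 0 (t-d))^2 ≤ t * t := by nlinarith
    nlinarith
  · rw [h]; nlinarith

/-- Let `f x = (1+x)^{-p}` with `1 < p ≤ 2` and, for `d > 0`,
`g d r = π · (max 0 (√(f r / π) − d))²`.  Then for every `ε > 0` there is a constant
`C` such that `∫₀^∞ (f r − g d r) dr ≤ C · d^{2 − 2/p − ε}` for all sufficiently
small `d > 0`. -/
theorem stmt_7 (p : ℝ) (hp : 1 < p) (hp2 : p ≤ 2)
    (f : ℝ → ℝ) (hf : ∀ x ≥ (0:ℝ), f x = (1 + x) ^ (-p))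
    (g : ℝ → ℝ → ℝ)
    (hg : ∀ d > (0:ℝ), ∀ r ≥ (0:ℝ),
      g d r = π * (max 0 (Real.sqrt (f r / π) - d)) ^ 2) :
    ∀ ε > (0:ℝ), ∃ C : ℝ, ∃ d₀ > (0:ℝ), ∀ d, 0 < d → d < d₀ →
      (∫ r in Set.Ioi (0:ℝ), (f r - g d r)) ≤ C * d ^ (2 - 2 / p - ε) := by
  intro ε hε
  have hπ := pi_pos
  have hp0 : (0:ℝ) < p := by linarith
  have hp1 : p ≠ 0 := hp0.ne'
  obtain ⟨s, hs_def⟩ : ∃ s : ℝ, s = -(p/2) + p*ε/2 := ⟨_, rfl⟩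
  have hs1 : (0:ℝ) < s + 1 := by nlinarith [mul_pos hp0 hε]
  have hs_neg1 : -1 < s := by linarith
  have hs_le : -(p/2) ≤ s := by nlinarith [mul_pos hp0 hε]
  set F : ℝ → ℝ := fun r => (1+r) ^ (-p) with hF_def
  have hF_nonneg : ∀ r : ℝ, 0 ≤ r → 0 ≤ F r := fun r hr => Real.rpow_nonneg (by linarith) _
  have hFmeas : Measurable F := by fun_prop
  have hFint0 : IntegrableOn F (Ioi (0:ℝ)) := by
    simpa using (shift_int (-p) (by linarith) 0 le_rfl).1
  refine ⟨π ^ ((p-1)/p) / (p-1) * 1 + 2 * Real.sqrt π * (π ^ (-(s+1)/p) / (s+1)),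
    (Real.sqrt π)⁻¹, inv_pos.mpr (Real.sqrt_pos.mpr hπ), ?_⟩
  intro d hd hdlt
  have hsπ0 : (0:ℝ) < Real.sqrt π := Real.sqrt_pos.mpr hπ
  have hsπ1 : (1:ℝ) < Real.sqrt π := by
    have := Real.lt_sqrt (x := 1) zero_le_one (y := π)
    rw [one_pow] at this
    exact this.mpr (by linarith [pi_gt_three])
  have hd1 : d < 1 := lt_of_lt_of_le hdlt (by
    rw [inv_le_one_iff₀]; right; exact hsπ1.le)
  obtain ⟨A, hA_def⟩ : ∃ A : ℝ, A = π * d^2 := ⟨_, rfl⟩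
  have hA0 : 0 < A := by rw [hA_def]; positivity
  have hA1 : A < 1 := by
    have h1 : Real.sqrt π * d < 1 := by
      calc Real.sqrt π * d < Real.sqrt π * (Real.sqrt π)⁻¹ :=
            mul_lt_mul_of_pos_left hdlt hsπ0
      _ = 1 := mul_inv_cancel₀ hsπ0.ne'
    have h2 : (Real.sqrt π * d) * (Real.sqrt π * d) < 1 := by
      nlinarith [mul_pos hsπ0 hd]
    rw [hA_def]; nlinarith [Real.mul_self_sqrt hπ.le]
  obtain ⟨R, hR_def⟩ : ∃ R : ℝ, R = A ^ (-1/p) - 1 := ⟨_, rfl⟩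
  have h1R : 1 + R = A ^ (-1/p) := by rw [hR_def]; ring
  have h1Rgt : 1 < A ^ (-1/p) := by
    rw [Real.one_lt_rpow_iff_of_pos hA0]
    right
    refine ⟨hA1, ?_⟩
    have h3 : (0:ℝ) < 1/p := by positivity
    have h4 : -1/p = -(1/p) := by ring
    rw [h4]; linarith
  have hR0 : 0 < R := by rw [hR_def]; linarith
  have h1Rpos : (0:ℝ) < 1 + R := by linarith
  -- the function G
  set G : ℝ → ℝ := fun r => π * (max 0 (Real.sqrt (F r / π) - d)) ^ 2 with hG_def
  have hGmeas : Measurable G := by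
    apply measurable_const.mul
    exact ((measurable_const.max (((hFmeas.div_const π).sqrt).sub measurable_const)).pow
      measurable_const)
  have hG_nonneg : ∀ r : ℝ, 0 ≤ G r := fun r => by
    have : (0:ℝ) ≤ (max 0 (Real.sqrt (F r / π) - d))^2 := sq_nonneg _
    positivity
  have hG_le_F : ∀ r : ℝ, 0 ≤ r → G r ≤ F r := fun r hr =>
    ptwise2 d (F r) hd.le (hF_nonneg r hr)
  have hGint0 : IntegrableOn G (Ioi (0:ℝ)) := by
    refine Integrable.mono hFint0 (hGmeas.aestronglyMeasurable.restrict) ?_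
    filter_upwards [ae_restrict_mem measurableSet_Ioi] with r hr
    rw [Real.norm_eq_abs, Real.norm_eq_abs, abs_of_nonneg (hG_nonneg r),
      abs_of_nonneg (hF_nonneg r (le_of_lt hr))]
    exact hG_le_F r (le_of_lt hr)
  have hFGint : IntegrableOn (fun r => F r - G r) (Ioi (0:ℝ)) := hFint0.sub hGint0
  -- replace f, g by F, G
  have h_eq : ∫ r in Ioi (0:ℝ), (f r - g d r) = ∫ r in Ioi (0:ℝ), (F r - G r) := by
    refine setIntegral_congr_fun measurableSet_Ioi (fun r hr => ?_)
    have hr0 : (0:ℝ) ≤ r := le_of_lt hr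
    rw [hf r hr0, hg d hd r hr0, hf r hr0]
  rw [h_eq]
  -- split the integral
  have hIocsub : Ioc (0:ℝ) R ⊆ Ioi 0 := Ioc_subset_Ioi_self
  have hIoisub : Ioi R ⊆ Ioi (0:ℝ) := Ioi_subset_Ioi hR0.le
  have hsplit : ∫ r in Ioi (0:ℝ), (F r - G r) =
      (∫ r in Ioc (0:ℝ) R, (F r - G r)) + ∫ r in Ioi R, (F r - G r) := by
    rw [← Ioc_union_Ioi_eq_Ioi hR0.le]
    exact setIntegral_union (Ioc_disjoint_Ioi le_rfl) measurableSet_Ioi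
      (hFGint.mono_set hIocsub) (hFGint.mono_set hIoisub)
  rw [hsplit]
  -- tail estimate
  have htail_int := (shift_int (-p) (by linarith) R hR0.le).1
  have htail : ∫ r in Ioi R, (F r - G r) ≤ (1+R) ^ (-p+1) / (p-1) := by
    have h1 : ∫ r in Ioi R, (F r - G r) ≤ ∫ r in Ioi R, F r := by
      refine setIntegral_mono_on (hFGint.mono_set hIoisub) (by exact htail_int)
        measurableSet_Ioi (fun r hr => ?_)
      have := hG_nonneg r
      simp only [hF_def]
      linarith
    have h2 : ∫ r in Ioi R, F r = -(1+R) ^ (-p+1) / (-p+1) :=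
      (shift_int (-p) (by linarith) R hR0.le).2
    have h3 : -(1+R) ^ (-p+1) / (-p+1) = (1+R) ^ (-p+1) / (p-1) := by
      rw [show (-p+1) = -(p-1) by ring, div_neg, neg_div, neg_neg]
    calc ∫ r in Ioi R, (F r - G r) ≤ ∫ r in Ioi R, F r := h1
      _ = -(1+R) ^ (-p+1) / (-p+1) := h2
      _ = (1+R) ^ (-p+1) / (p-1) := h3
  -- head estimate
  have hcont : IntegrableOn (fun r : ℝ => (1+r) ^ s) (Ioc (0:ℝ) R) := by
    have hco : ContinuousOn (fun r : ℝ => (1+r) ^ s) (Icc (0:ℝ) R) := by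
      apply ContinuousOn.rpow_const
      · exact (continuous_const.add continuous_id).continuousOn
      · intro x hx
        left
        have := hx.1
        intro hc; linarith [hc]
    exact (hco.integrableOn_compact isCompact_Icc).mono_set Ioc_subset_Icc_self
  have hhead1 : ∫ r in Ioc (0:ℝ) R, (F r - G r) ≤
      ∫ r in Ioc (0:ℝ) R, (2*d*Real.sqrt π) * (1+r) ^ s := by
    refine setIntegral_mono_on (hFGint.mono_set hIocsub) (hcont.const_mul _)
      measurableSet_Ioc (fun r hr => ?_)
    have hr0 : (0:ℝ) < r := hr.1
    have h1r : (0:ℝ) < 1 + r := by linarith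
    have hsqrtF : Real.sqrt (F r) = (1+r) ^ (-(p/2)) := by
      simp only [hF_def]
      rw [Real.sqrt_eq_rpow, ← Real.rpow_mul h1r.le]
      congr 1
      ring
    have hb1 : F r - G r ≤ 2*d*Real.sqrt π * Real.sqrt (F r) :=
      ptwise d hd (F r) (hF_nonneg r hr0.le)
    have hb2 : Real.sqrt (F r) ≤ (1+r) ^ s := by
      rw [hsqrtF]
      exact Real.rpow_le_rpow_of_exponent_le (by linarith) hs_le
    have hc0 : (0:ℝ) ≤ 2*d*Real.sqrt π := by positivity
    calc F r - G r ≤ 2*d*Real.sqrt π * Real.sqrt (F r) := hb1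
      _ ≤ 2*d*Real.sqrt π * ((1+r) ^ s) := mul_le_mul_of_nonneg_left hb2 hc0
  have hhead2 : ∫ r in Ioc (0:ℝ) R, (2*d*Real.sqrt π) * (1+r) ^ s =
      (2*d*Real.sqrt π) * ∫ r in Ioc (0:ℝ) R, (1+r) ^ s :=
    MeasureTheory.integral_const_mul _ _
  have hval : ∫ r in Ioc (0:ℝ) R, (1+r) ^ s ≤ (1+R) ^ (s+1) / (s+1) := by
    rw [← intervalIntegral.integral_of_le hR0.le]
    have hcomp := intervalIntegral.integral_comp_add_left (a := (0:ℝ)) (b := R)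
      (fun x : ℝ => x ^ s) 1
    simp only [add_zero] at hcomp
    rw [hcomp, integral_rpow (Or.inl hs_neg1), Real.one_rpow]
    have h1 : ((1+R) ^ (s+1) - 1) / (s+1) ≤ (1+R) ^ (s+1) / (s+1) := by
      gcongr
      linarith
    exact h1
  -- power algebra
  have hAd : ∀ t : ℝ, A ^ t = π ^ t * d ^ (2*t) := by
    intro t
    have h2 : (d:ℝ)^(2:ℕ) = d ^ ((2:ℕ):ℝ) := (Real.rpow_natCast d 2).symm
    rw [hA_def, Real.mul_rpow hπ.le (by positivity), h2, ← Real.rpow_mul hd.le]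
    norm_num
  have htailpow : (1+R) ^ (-p+1) = π^((p-1)/p) * d^(2*((p-1)/p)) := by
    rw [h1R, ← Real.rpow_mul hA0.le,
      show (-1)/p * (-p+1) = (p-1)/p by field_simp; ring, hAd]
  have hheadpow : (1+R) ^ (s+1) = π^(-(s+1)/p) * d^(2*(-(s+1)/p)) := by
    rw [h1R, ← Real.rpow_mul hA0.le,
      show (-1)/p * (s+1) = -(s+1)/p by field_simp, hAd]
  have hdterm : d * d ^ (2*(-(s+1)/p)) = d ^ (2-2/p-ε) := by
    nth_rewrite 1 [← Real.rpow_one d]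
    rw [← Real.rpow_add hd]
    congr 1
    rw [hs_def]; field_simp; ring
  have hexp_le : 2-2/p-ε ≤ 2*((p-1)/p) := by
    rw [show 2*((p-1)/p) = 2 - 2/p by field_simp]
    linarith
  have hdt : d^(2*((p-1)/p)) ≤ d^(2-2/p-ε) :=
    Real.rpow_le_rpow_of_exponent_ge hd hd1.le hexp_le
  have hA_head : ∫ r in Ioc (0:ℝ) R, (F r - G r) ≤
      2*Real.sqrt π*(π^(-(s+1)/p)/(s+1)) * d^(2-2/p-ε) := by
    calc ∫ r in Ioc (0:ℝ) R, (F r - G r)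
        ≤ (2*d*Real.sqrt π) * ∫ r in Ioc (0:ℝ) R, (1+r) ^ s := hhead1.trans_eq hhead2
      _ ≤ (2*d*Real.sqrt π) * ((1+R)^(s+1)/(s+1)) :=
          mul_le_mul_of_nonneg_left hval (by positivity)
      _ = 2*Real.sqrt π*(π^(-(s+1)/p)/(s+1)) * (d * d^(2*(-(s+1)/p))) := by
          rw [hheadpow]; ring
      _ = 2*Real.sqrt π*(π^(-(s+1)/p)/(s+1)) * d^(2-2/p-ε) := by rw [hdterm]
  have hK1 : (0:ℝ) ≤ π^((p-1)/p)/(p-1) :=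
    div_nonneg (Real.rpow_nonneg hπ.le _) (by linarith)
  have hA_tail : ∫ r in Ioi R, (F r - G r) ≤ π^((p-1)/p)/(p-1) * d^(2-2/p-ε) := by
    calc ∫ r in Ioi R, (F r - G r) ≤ (1+R) ^ (-p+1) / (p-1) := htail
      _ = π^((p-1)/p)/(p-1) * d^(2*((p-1)/p)) := by rw [htailpow]; ring
      _ ≤ π^((p-1)/p)/(p-1) * d^(2-2/p-ε) := mul_le_mul_of_nonneg_left hdt hK1
  have hC : (π ^ ((p-1)/p) / (p-1) * 1 + 2 * Real.sqrt π * (π ^ (-(s+1)/p) / (s+1)))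
        * d ^ (2-2/p-ε)
      = π^((p-1)/p)/(p-1) * d^(2-2/p-ε)
        + 2*Real.sqrt π*(π^(-(s+1)/p)/(s+1)) * d^(2-2/p-ε) := by ring
  linarith [hA_head, hA_tail]
end

section
/- Let (a_i)_{i≥1} be a nonincreasing sequence of positive reals with ∑ a_i = ∞ and ∑ a_i² < ∞. For each k let (d(k)_i) be a maximizer of ∑_i d_i a_i over sequences of nonnegative integers with ∑_i (d_i² + d_i) ≤ 2k, and let I(k) be the least i with d(k)_i = 0. Then I(k) → ∞ as k → ∞. -/
open Real Filter Finset

/-- Let `(a_i)` be a nonincreasing sequence of positive reals with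
`∑ a_i = ∞` and `∑ a_i² < ∞`.  For each `k`, let `(d(k)_i)` be a maximizer of
`∑ d_i a_i` over finitely supported sequences of nonnegative integers with
`∑ (d_i² + d_i) ≤ 2k` (nonincreasing in `i`, vanishing for `i > k`, attaining the
constraint with equality), and let `I(k)` be the least `i` with `d(k)_i = 0`.
Then `I(k) → ∞` as `k → ∞`. -/
theorem stmt_14 (a : ℕ → ℝ) (hapos : ∀ i, 0 < a i) (hanti : Antitone a)
    (hdiv : Filter.Tendsto (fun n => ∑ i ∈ Finset.range n, a i) Filter.atTop Filter.atTop)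
    (hsq : Summable (fun i => (a i) ^ 2))
    (d : ℕ → ℕ → ℕ)
    (hdanti : ∀ k, Antitone (d k))
    (hdzero : ∀ k, ∀ i, k < i → d k i = 0)
    (heq : ∀ k : ℕ, 0 < k → (∑' i, (((d k i : ℝ)) ^ 2 + (d k i : ℝ))) = 2 * k)
    (hmax : ∀ k : ℕ, 0 < k → ∀ e : ℕ → ℕ, (Function.support e).Finite →
      (∑' i, (((e i : ℝ)) ^ 2 + (e i : ℝ))) ≤ 2 * k →
      (∑' i, (e i : ℝ) * a i) ≤ ∑' i, (d k i : ℝ) * a i) :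
    Filter.Tendsto (fun k => sInf {i | d k i = 0}) Filter.atTop Filter.atTop := by
  rw [Filter.tendsto_atTop]
  intro N
  -- basic constants
  set SN : ℝ := ∑ i ∈ Finset.range N, a i ^ 2 with hSN
  set S' : ℝ := ∑ i ∈ Finset.range (N + 1), a i ^ 2 with hS'
  set A' : ℝ := ∑ i ∈ Finset.range (N + 1), a i with hA'
  have hS'pos : 0 < S' :=
    Finset.sum_pos (fun i _ => pow_pos (hapos i) 2) ⟨0, by simp⟩
  have hSNnonneg : 0 ≤ SN := Finset.sum_nonneg fun i _ => sq_nonneg _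
  have hSNlt : SN < S' := by
    have h : S' = SN + a N ^ 2 := by rw [hS', hSN, Finset.sum_range_succ]
    nlinarith [pow_pos (hapos N) 2]
  have hA'nonneg : 0 ≤ A' := Finset.sum_nonneg fun i _ => (hapos i).le
  set s : ℝ := Real.sqrt S' with hs
  have hspos : 0 < s := Real.sqrt_pos.2 hS'pos
  have hs2 : s ^ 2 = S' := Real.sq_sqrt hS'pos.le
  have hsNlt : Real.sqrt SN < s := Real.sqrt_lt_sqrt hSNnonneg hSNlt
  -- eventual largeness of √(2k)
  have hev : ∀ c : ℝ, ∀ᶠ k : ℕ in atTop, c < Real.sqrt (2 * k) := by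
    intro c
    filter_upwards [Filter.eventually_gt_atTop (⌈c ^ 2⌉₊ + 1)] with k hk
    have hk1 : (⌈c ^ 2⌉₊ : ℝ) + 1 ≤ (k : ℝ) := by exact_mod_cast hk.le
    have h2k : c ^ 2 < 2 * (k : ℝ) := by
      have := Nat.le_ceil (c ^ 2)
      nlinarith [Nat.cast_nonneg (α := ℝ) ⌈c ^ 2⌉₊]
    calc c ≤ |c| := le_abs_self c
      _ = Real.sqrt (c ^ 2) := (Real.sqrt_sq_eq_abs c).symm
      _ < Real.sqrt (2 * k) := Real.sqrt_lt_sqrt (sq_nonneg c) h2k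
  filter_upwards [hev (A' / s), hev (2 * A' / (s - Real.sqrt SN)),
    Filter.eventually_gt_atTop 0] with k h1 h2 hk
  set u : ℝ := Real.sqrt (2 * k) with hu
  have hunn : 0 ≤ u := Real.sqrt_nonneg _
  have hu2 : u ^ 2 = 2 * k := Real.sq_sqrt (by positivity)
  -- suppose sInf < N; derive contradiction
  by_contra hcon
  push_neg at hcon
  have hne : {i | d k i = 0}.Nonempty := ⟨k + 1, hdzero k (k + 1) (by omega)⟩
  have hmem : d k (sInf {i | d k i = 0}) = 0 := Nat.sInf_mem hne
  have hsupp : ∀ i, N ≤ i → d k i = 0 := by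
    intro i hi
    have h := hdanti k (show sInf {i | d k i = 0} ≤ i from le_trans hcon.le hi)
    omega
  -- the value of d k
  set V : ℝ := ∑' i, (d k i : ℝ) * a i with hV
  have hVsum : V = ∑ i ∈ Finset.range N, (d k i : ℝ) * a i := by
    refine tsum_eq_sum ?_
    intro i hi
    rw [hsupp i (by simpa using hi)]
    simp
  have hVnonneg : 0 ≤ V := by
    rw [hVsum]
    exact Finset.sum_nonneg fun i _ => mul_nonneg (Nat.cast_nonneg _) (hapos i).le
  -- sum of squares of d k is at most 2k
  set R : ℕ := k + 1 + N with hR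
  have hsq2k : ∑ i ∈ Finset.range N, (d k i : ℝ) ^ 2 ≤ 2 * k := by
    have heqsum : (∑ i ∈ Finset.range R, (((d k i : ℝ)) ^ 2 + (d k i : ℝ))) = 2 * k := by
      rw [← heq k hk]
      refine (tsum_eq_sum ?_).symm
      intro i hi
      rw [hdzero k i (by simp at hi; omega)]
      simp
    have h1' : ∑ i ∈ Finset.range N, (d k i : ℝ) ^ 2
        ≤ ∑ i ∈ Finset.range R, (d k i : ℝ) ^ 2 :=
      Finset.sum_le_sum_of_subset_of_nonneg
        (Finset.range_subset_range.2 (by omega)) (fun i _ _ => sq_nonneg _)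
    have h2' : ∑ i ∈ Finset.range R, (d k i : ℝ) ^ 2
        ≤ ∑ i ∈ Finset.range R, (((d k i : ℝ)) ^ 2 + (d k i : ℝ)) :=
      Finset.sum_le_sum fun i _ => le_add_of_nonneg_right (Nat.cast_nonneg _)
    linarith
  -- Cauchy–Schwarz upper bound for V
  have hVle : V ≤ u * Real.sqrt SN := by
    have hCS := Finset.sum_mul_sq_le_sq_mul_sq (Finset.range N)
      (fun i => (d k i : ℝ)) a
    have hV2 : V ^ 2 ≤ 2 * k * SN := by
      rw [hVsum]
      calc (∑ i ∈ Finset.range N, (d k i : ℝ) * a i) ^ 2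
          ≤ (∑ i ∈ Finset.range N, (d k i : ℝ) ^ 2) * SN := hCS
        _ ≤ 2 * k * SN := by
            exact mul_le_mul_of_nonneg_right hsq2k hSNnonneg
    have : V ≤ Real.sqrt (2 * k * SN) := by
      rw [show Real.sqrt (2 * k * SN) = Real.sqrt ((Real.sqrt (2*k*SN))^2) from
        (Real.sqrt_sq (Real.sqrt_nonneg _)).symm]
      rw [Real.sq_sqrt (by positivity)]
      nlinarith [Real.sq_sqrt (show (0:ℝ) ≤ 2*k*SN by positivity),
        Real.sqrt_nonneg (2*k*SN)]
    calc V ≤ Real.sqrt (2 * k * SN) := this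
      _ = u * Real.sqrt SN := Real.sqrt_mul (by positivity) SN
  -- the competitor sequence e
  set lam : ℝ := (u * s - A') / S' with hlam
  have hlamnn : 0 ≤ lam := by
    apply div_nonneg _ hS'pos.le
    have : A' / s < u := h1
    nlinarith [(div_lt_iff₀ hspos).1 h1]
  have hlamS' : lam * S' = u * s - A' := by
    rw [hlam, div_mul_cancel₀ _ hS'pos.ne']
  set e : ℕ → ℕ := fun i => if i < N + 1 then ⌊lam * a i⌋₊ else 0 with he
  have hez : ∀ i, N + 1 ≤ i → e i = 0 := by
    intro i hi; simp [he, show ¬ i ≤ N by omega]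
  have hefin : (Function.support e).Finite := by
    apply Set.Finite.subset (Finset.range (N + 1)).finite_toSet
    intro i hi
    simp only [Function.mem_support] at hi
    by_contra hii
    exact hi (hez i (by simpa using hii))
  have hecon : (∑' i, (((e i : ℝ)) ^ 2 + (e i : ℝ))) ≤ 2 * k := by
    have hsum : (∑' i, (((e i : ℝ)) ^ 2 + (e i : ℝ)))
        = ∑ i ∈ Finset.range (N + 1), (((e i : ℝ)) ^ 2 + (e i : ℝ)) := by
      refine tsum_eq_sum ?_
      intro i hi
      rw [hez i (by simpa using hi)]; simp
    rw [hsum]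
    have hstep : ∑ i ∈ Finset.range (N + 1), (((e i : ℝ)) ^ 2 + (e i : ℝ))
        ≤ ∑ i ∈ Finset.range (N + 1), ((lam * a i) ^ 2 + lam * a i) := by
      refine Finset.sum_le_sum ?_
      intro i hi
      have hpos : (0:ℝ) ≤ lam * a i := mul_nonneg hlamnn (hapos i).le
      have hfl : ((e i : ℝ)) ≤ lam * a i := by
        simp only [he, if_pos (Finset.mem_range.1 hi)]
        exact Nat.floor_le hpos
      have hfn : (0:ℝ) ≤ (e i : ℝ) := Nat.cast_nonneg _
      exact add_le_add (pow_le_pow_left₀ hfn hfl 2) hfl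
    have hval : ∑ i ∈ Finset.range (N + 1), ((lam * a i) ^ 2 + lam * a i)
        = lam ^ 2 * S' + lam * A' := by
      rw [hS', hA', Finset.mul_sum, Finset.mul_sum, ← Finset.sum_add_distrib]
      congr 1; ext i; ring
    have h5 : lam ^ 2 * S' + lam * A' ≤ 2 * k := by
      have h3 : lam ^ 2 * S' + lam * A' = lam * (u * s) := by
        have h3' : lam ^ 2 * S' = lam * (lam * S') := by ring
        rw [h3', hlamS']; ring
      rw [h3]
      have h4 : lam * s * s ≤ u * s := by
        have h4' : lam * s * s = lam * S' := by rw [← hs2]; ring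
        rw [h4', hlamS']
        linarith
      have hls : lam * s ≤ u := le_of_mul_le_mul_right h4 hspos
      have h6 : lam * (u * s) = (lam * s) * u := by ring
      rw [h6, ← hu2]
      calc lam * s * u ≤ u * u := mul_le_mul_of_nonneg_right hls hunn
        _ = u ^ 2 := (sq u).symm
    calc ∑ i ∈ Finset.range (N + 1), (((e i : ℝ)) ^ 2 + (e i : ℝ))
        ≤ lam ^ 2 * S' + lam * A' := hval ▸ hstep
      _ ≤ 2 * k := h5
  have hvle := hmax k hk e hefin hecon
  -- value lower bound for e
  have heval : u * s - 2 * A' ≤ ∑' i, (e i : ℝ) * a i := by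
    have hsum : (∑' i, (e i : ℝ) * a i)
        = ∑ i ∈ Finset.range (N + 1), (e i : ℝ) * a i := by
      refine tsum_eq_sum ?_
      intro i hi
      rw [hez i (by simpa using hi)]; simp
    rw [hsum]
    have hstep : ∑ i ∈ Finset.range (N + 1), (lam * a i - 1) * a i
        ≤ ∑ i ∈ Finset.range (N + 1), (e i : ℝ) * a i := by
      refine Finset.sum_le_sum ?_
      intro i hi
      have hfl : lam * a i - 1 ≤ (e i : ℝ) := by
        simp only [he, if_pos (Finset.mem_range.1 hi)]
        exact (Nat.sub_one_lt_floor (lam * a i)).le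
      exact mul_le_mul_of_nonneg_right hfl (hapos i).le
    have hval : ∑ i ∈ Finset.range (N + 1), (lam * a i - 1) * a i
        = lam * S' - A' := by
      rw [hS', hA', Finset.mul_sum, ← Finset.sum_sub_distrib]
      congr 1; ext i; ring
    rw [hval] at hstep
    rw [hlamS'] at hstep
    linarith
  -- contradiction
  have hfinal : u * (s - Real.sqrt SN) ≤ 2 * A' := by
    have h7 : u * s - 2 * A' ≤ u * Real.sqrt SN := le_trans heval (le_trans hvle hVle)
    rw [mul_sub]
    linarith
  have hpos : 0 < s - Real.sqrt SN := by linarith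
  have := (div_lt_iff₀ hpos).1 h2
  linarith
end

section
/- With the setup of the maximization problem: (a_i) nonincreasing positive with ∑ a_i² = 2·vol < ∞, and (d(k)_i) a maximizer of ∑ d_i a_i subject to ∑(d_i² + d_i) ≤ 2k with equality, and I(k) the least index where d(k) vanishes: for every j < I(k), one has d(k)_j ≤ a_j / a_{I(k) + d(k)_j − 1}. Moreover, combining over j yields a²_{I(k)+⌈√(2k)⌉} ≤ 4·vol/(2k). -/
open Real Filter Finset

/-- With `(a_i)` nonincreasing positive, `∑ a_i² = 2·vol < ∞`, and
`(d_i)` a maximizer of `∑ d_i a_i` over finitely supported sequences of nonnegative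
integers subject to `∑ (d_i² + d_i) ≤ 2k` (with equality), `I` the least index where
`d` vanishes, and each `d_j ≤ √(2k) + 1`:  for every `j < I` one has
`d_j ≤ a_j / a_{I + d_j − 1}`, and moreover `a²_{I + ⌈√(2k)⌉} ≤ 4·vol/(2k)`. -/
theorem stmt_15 (a : ℕ → ℝ) (hapos : ∀ i, 0 < a i) (hanti : Antitone a)
    (vol : ℝ) (hsq : Summable (fun i => (a i) ^ 2))
    (hvol : (∑' i, (a i) ^ 2) = 2 * vol)
    (k : ℕ) (hk : 0 < k) (d : ℕ → ℕ)
    (hdanti : Antitone d)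
    (hdzero : ∀ i, k < i → d i = 0)
    (heq : (∑' i, (((d i : ℝ)) ^ 2 + (d i : ℝ))) = 2 * k)
    (hmax : ∀ e : ℕ → ℕ, (Function.support e).Finite →
      (∑' i, (((e i : ℝ)) ^ 2 + (e i : ℝ))) ≤ 2 * k →
      (∑' i, (e i : ℝ) * a i) ≤ ∑' i, (d i : ℝ) * a i)
    (hdbound : ∀ j, (d j : ℝ) ≤ Real.sqrt (2 * k) + 1)
    (I : ℕ) (hI : I = sInf {i | d i = 0}) :
    (∀ j < I, (d j : ℝ) ≤ a j / a (I + d j - 1)) ∧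
    (a (I + ⌈Real.sqrt (2 * k)⌉₊)) ^ 2 ≤ 4 * vol / (2 * k) := by
  have hne : {i | d i = 0}.Nonempty := ⟨k + 1, hdzero _ (by omega)⟩
  have hIzero : d I = 0 := by rw [hI]; exact Nat.sInf_mem hne
  have hge : ∀ i, I ≤ i → d i = 0 := fun i hi =>
    Nat.le_zero.mp (hIzero ▸ hdanti hi)
  have hpos : ∀ j, j < I → 1 ≤ d j := by
    intro j hj
    by_contra h
    push_neg at h
    have hj0 : d j = 0 := by omega
    have : I ≤ j := hI ▸ Nat.sInf_le hj0
    omega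
  -- tsum of constraint as finite sum over range I
  have hsum2k : ∑ i ∈ Finset.range I, ((d i : ℝ) ^ 2 + d i) = 2 * k := by
    rw [← heq]
    refine (tsum_eq_sum ?_).symm
    intro i hi
    have : d i = 0 := hge i (by simpa using hi)
    simp [this]
  -- KEY exchange lemma
  have key : ∀ j, j < I → (d j : ℝ) * a (I + d j - 1) ≤ a j := by
    intro j hj
    set m := d j with hm
    have hm1 : 1 ≤ m := hpos j hj
    set N := I + m with hN
    -- the modified sequence
    set e : ℕ → ℕ := fun i => if i = j then m - 1 else if i ∈ Finset.Ico I N then 1 else d i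
      with he
    have hej : e j = m - 1 := by simp [he]
    have heIco : ∀ i ∈ Finset.Ico I N, e i = 1 := by
      intro i hi
      have : i ≠ j := by
        have := (Finset.mem_Ico.mp hi).1; omega
      simp only [he]
      rw [if_neg this, if_pos hi]
    have heother : ∀ i, i ≠ j → i ∉ Finset.Ico I N → e i = d i := by
      intro i h1 h2
      simp only [he]
      rw [if_neg h1, if_neg h2]
    have hezero : ∀ i, N ≤ i → e i = 0 := by
      intro i hi
      have h1 : i ≠ j := by omega
      have h2 : i ∉ Finset.Ico I N := by simp [Finset.mem_Ico]; omega
      rw [heother i h1 h2]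
      exact hge i (by omega)
    have hefin : (Function.support e).Finite := by
      apply Set.Finite.subset (Finset.range N).finite_toSet
      intro i hi
      simp only [Function.mem_support] at hi
      simp only [Finset.coe_range, Set.mem_Iio]
      by_contra h
      exact hi (hezero i (by omega))
    have hcast : ((m - 1 : ℕ) : ℝ) = (m : ℝ) - 1 := by
      have := Nat.cast_sub (R := ℝ) hm1; simpa using this
    -- generic difference formula
    have hdiff : ∀ F : ℕ → ℕ → ℝ,
        ∑ i ∈ Finset.range N, F (e i) i
          = ∑ i ∈ Finset.range N, F (d i) i
            + ((F (m - 1) j - F m j) + ∑ i ∈ Finset.Ico I N, (F 1 i - F 0 i)) := by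
      intro F
      have hsub : insert j (Finset.Ico I N) ⊆ Finset.range N := by
        intro i hi
        simp only [Finset.mem_insert, Finset.mem_Ico] at hi
        simp only [Finset.mem_range]
        rcases hi with h | h
        · omega
        · omega
      have hjni : j ∉ Finset.Ico I N := by simp [Finset.mem_Ico]; omega
      have h0 : ∑ i ∈ Finset.range N, (F (e i) i - F (d i) i)
          = ∑ i ∈ insert j (Finset.Ico I N), (F (e i) i - F (d i) i) := by
        refine (Finset.sum_subset hsub ?_).symm
        intro i _ hiS
        simp only [Finset.mem_insert, not_or] at hiS
        rw [heother i hiS.1 hiS.2]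
        ring
      have h1 : ∑ i ∈ insert j (Finset.Ico I N), (F (e i) i - F (d i) i)
          = (F (m - 1) j - F m j) + ∑ i ∈ Finset.Ico I N, (F 1 i - F 0 i) := by
        rw [Finset.sum_insert hjni, hej]
        congr 1
        refine Finset.sum_congr rfl ?_
        intro i hi
        rw [heIco i hi, hge i (Finset.mem_Ico.mp hi).1]
      have := h0.trans h1
      rw [Finset.sum_sub_distrib] at this
      linarith
    -- constraint for e
    have hconstr : (∑' i, (((e i : ℝ)) ^ 2 + (e i : ℝ))) ≤ 2 * k := by
      have ht : (∑' i, (((e i : ℝ)) ^ 2 + (e i : ℝ)))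
          = ∑ i ∈ Finset.range N, ((e i : ℝ) ^ 2 + (e i : ℝ)) := by
        refine tsum_eq_sum ?_
        intro i hi
        rw [hezero i (by simpa using hi)]
        simp
      have hd2 : ∑ i ∈ Finset.range N, ((d i : ℝ) ^ 2 + (d i : ℝ)) = 2 * k := by
        rw [← hsum2k]
        refine (Finset.sum_subset ?_ ?_).symm
        · intro i hi; simp only [Finset.mem_range] at *; omega
        · intro i _ hi
          rw [hge i (by simpa using hi)]
          simp
      have := hdiff (fun x i => (x : ℝ) ^ 2 + x)
      rw [ht, this, hd2]
      have hcard : ∑ i ∈ Finset.Ico I N, (((1:ℕ) : ℝ) ^ 2 + ((1:ℕ):ℝ) - (((0:ℕ):ℝ) ^ 2 + ((0:ℕ):ℝ)))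
          = 2 * m := by
        rw [Finset.sum_const, Nat.card_Ico]
        have : N - I = m := by omega
        rw [this]
        push_cast
        ring
      rw [hcard, hcast]
      ring_nf
      nlinarith [sq_nonneg ((m:ℝ))]
    -- apply maximality
    have hle := hmax e hefin hconstr
    have hte : (∑' i, (e i : ℝ) * a i) = ∑ i ∈ Finset.range N, (e i : ℝ) * a i := by
      refine tsum_eq_sum ?_
      intro i hi
      rw [hezero i (by simpa using hi)]
      simp
    have htd : (∑' i, (d i : ℝ) * a i) = ∑ i ∈ Finset.range N, (d i : ℝ) * a i := by
      refine tsum_eq_sum ?_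
      intro i hi
      rw [hge i (by simp only [Finset.mem_range] at hi; omega)]
      simp
    rw [hte, htd, hdiff (fun x i => (x : ℝ) * a i)] at hle
    simp only [hcast] at hle
    have hIco : ∑ i ∈ Finset.Ico I N, (((1:ℕ):ℝ) * a i - ((0:ℕ):ℝ) * a i)
        = ∑ i ∈ Finset.Ico I N, a i := by
      refine Finset.sum_congr rfl ?_
      intro i _; push_cast; ring
    rw [hIco] at hle
    have hsumIco : (m : ℝ) * a (I + m - 1) ≤ ∑ i ∈ Finset.Ico I N, a i := by
      have : ∀ i ∈ Finset.Ico I N, a (I + m - 1) ≤ a i := by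
        intro i hi
        exact hanti (by have := (Finset.mem_Ico.mp hi).2; omega)
      calc (m : ℝ) * a (I + m - 1) = (Finset.Ico I N).card • a (I + m - 1) := by
            rw [Nat.card_Ico]
            have : N - I = m := by omega
            rw [this, nsmul_eq_mul]
        _ ≤ ∑ i ∈ Finset.Ico I N, a i := Finset.card_nsmul_le_sum _ _ _ this
    -- from hle: sum_Ico - a j ≤ 0
    have : ∑ i ∈ Finset.Ico I N, a i ≤ a j := by linarith
    linarith
  constructor
  · intro j hj
    rw [le_div_iff₀ (hapos _)]
    exact key j hj
  -- part 2
  set c := ⌈Real.sqrt (2 * k)⌉₊ with hc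
  set A := a (I + c) with hA
  have hA0 : 0 < A := hapos _
  have hmono : ∀ j, j < I → (d j : ℝ) * A ≤ a j := by
    intro j hj
    have h1 := key j hj
    have hdc : d j ≤ c + 1 := by
      by_contra h
      push_neg at h
      have h2 : (c : ℝ) + 1 < (d j : ℝ) := by exact_mod_cast h
      have h3 : Real.sqrt (2 * k) ≤ (c : ℝ) := Nat.le_ceil _
      linarith [hdbound j]
    have h2 : A ≤ a (I + d j - 1) := hanti (by omega)
    calc (d j : ℝ) * A ≤ (d j : ℝ) * a (I + d j - 1) :=
          mul_le_mul_of_nonneg_left h2 (by positivity)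
      _ ≤ a j := h1
  have hsq' : ∀ j, j < I → (d j : ℝ) ^ 2 * A ^ 2 ≤ (a j) ^ 2 := by
    intro j hj
    have h0 : 0 ≤ (d j : ℝ) * A := by positivity
    have := pow_le_pow_left₀ h0 (hmono j hj) 2
    rwa [mul_pow] at this
  have hsumA : A ^ 2 * ∑ j ∈ Finset.range I, (d j : ℝ) ^ 2 ≤ 2 * vol := by
    have h1 : ∑ j ∈ Finset.range I, (d j : ℝ) ^ 2 * A ^ 2 ≤ ∑ j ∈ Finset.range I, (a j) ^ 2 :=
      Finset.sum_le_sum (fun j hj => hsq' j (Finset.mem_range.mp hj))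
    have h2 : ∑ j ∈ Finset.range I, (a j) ^ 2 ≤ 2 * vol := by
      rw [← hvol]
      exact Summable.sum_le_tsum _ (fun i _ => sq_nonneg _) hsq
    calc A ^ 2 * ∑ j ∈ Finset.range I, (d j : ℝ) ^ 2
        = ∑ j ∈ Finset.range I, (d j : ℝ) ^ 2 * A ^ 2 := by
            rw [Finset.mul_sum]
            exact Finset.sum_congr rfl fun _ _ => mul_comm _ _
      _ ≤ 2 * vol := h1.trans h2
  have hklesum : (k : ℝ) ≤ ∑ j ∈ Finset.range I, (d j : ℝ) ^ 2 := by
    have h1 : ∀ j ∈ Finset.range I, (d j : ℝ) ^ 2 + (d j : ℝ) ≤ 2 * (d j : ℝ) ^ 2 := by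
      intro j hj
      have := hpos j (Finset.mem_range.mp hj)
      have h2 : (1 : ℝ) ≤ (d j : ℝ) := by exact_mod_cast this
      nlinarith
    have h2 := Finset.sum_le_sum h1
    rw [hsum2k] at h2
    rw [← Finset.mul_sum] at h2
    linarith
  have hk' : (0 : ℝ) < (k : ℝ) := by exact_mod_cast hk
  have hfin : (k : ℝ) * A ^ 2 ≤ 2 * vol := by
    calc (k : ℝ) * A ^ 2 ≤ (∑ j ∈ Finset.range I, (d j : ℝ) ^ 2) * A ^ 2 :=
          mul_le_mul_of_nonneg_right hklesum (sq_nonneg _)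
      _ = A ^ 2 * ∑ j ∈ Finset.range I, (d j : ℝ) ^ 2 := by ring
      _ ≤ 2 * vol := hsumA
  show A ^ 2 ≤ 4 * vol / (2 * (k : ℝ))
  rw [le_div_iff₀ (by positivity)]
  nlinarith
end

section
/- Let f : [0,∞) → (0,1] be convex nonincreasing with decay rate p, i.e. lim_{x→∞} ln f(x)/ln x = −p with 1 < p ≤ 2. Given ε > 0, suppose for contradiction that |f'| > 1/n on the interval [n^{1/(p+1)}, n^{1/(p+1)+ε}]. Then the decrease of f over this interval is at least n^{−p/(p+1)}·(n^ε − 1), while the decay rate gives, for large n, the upper bound f(n^{1/(p+1)}) − f(n^{1/(p+1)+ε}) ≤ n^{−p/(p+1)}·(n^{ε/(p+1)} − n^{−ε(p + 1/(p+1) + ε)}); since for large n the first quantity exceeds the second, this is a contradiction. -/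
open Real Filter Set

/-- Let `f : [0,∞) → (0,1]` be differentiable, convex, nonincreasing
with decay rate `p ∈ (1,2]`, and fix `ε > 0`.  Then for all sufficiently large `n`
it is impossible that `|f'| > 1/n` everywhere on the interval
`[n^{1/(p+1)}, n^{1/(p+1)+ε}]`: the decrease of `f` over the interval would then be
at least `n^{-p/(p+1)}(n^ε − 1)`, exceeding the upper bound coming from the decay
rate, a contradiction. -/
theorem stmt_17 (p : ℝ) (hp : 1 < p) (hp2 : p ≤ 2) (f : ℝ → ℝ)
    (hdiff : ∀ x ≥ (0:ℝ), DifferentiableAt ℝ f x)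
    (hconv : ConvexOn ℝ (Set.Ici 0) f)
    (hanti : AntitoneOn f (Set.Ici 0))
    (hrange : ∀ x ≥ (0:ℝ), 0 < f x ∧ f x ≤ 1)
    (hdecay : Filter.Tendsto (fun x : ℝ => Real.log (f x) / Real.log x)
      Filter.atTop (nhds (-p)))
    (ε : ℝ) (hε : 0 < ε) :
    ∀ᶠ n : ℕ in Filter.atTop,
      (∀ x ∈ Set.Icc ((n : ℝ) ^ (1 / (p + 1))) ((n : ℝ) ^ (1 / (p + 1) + ε)),
        1 / (n : ℝ) < |deriv f x|) → False := by
  set q : ℝ := 1 / (p + 1) with hq_def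
  have hp1 : (0:ℝ) < p + 1 := by linarith
  have hq_pos : 0 < q := by positivity
  have hq_lt : q < 1/2 := by
    rw [hq_def]
    rw [div_lt_div_iff₀ hp1 (by norm_num)]
    linarith
  -- decay bound : eventually f x < x ^ (ε - p)
  have h1 : ∀ᶠ x : ℝ in atTop, Real.log (f x) / Real.log x < -p + ε := by
    apply hdecay.eventually_lt_const
    linarith
  have hbound : ∀ᶠ x : ℝ in atTop, f x < x ^ (ε - p) := by
    filter_upwards [h1, eventually_gt_atTop (1:ℝ)] with x hx hx1
    have hx0 : (0:ℝ) ≤ x := by linarith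
    have hlogx : 0 < Real.log x := Real.log_pos hx1
    have hfx : 0 < f x := (hrange x hx0).1
    have hlt : Real.log (f x) < (ε - p) * Real.log x := by
      have := (div_lt_iff₀ hlogx).mp hx; linarith
    calc f x = Real.exp (Real.log (f x)) := (Real.exp_log hfx).symm
      _ < Real.exp ((ε - p) * Real.log x) := Real.exp_lt_exp.mpr hlt
      _ = x ^ (ε - p) := by
          rw [Real.rpow_def_of_pos (by linarith), mul_comm]
  obtain ⟨X, hX⟩ := Filter.eventually_atTop.mp hbound
  -- eventual conditions on n
  have hNq : Tendsto (fun n : ℕ => (n:ℝ) ^ q) atTop atTop :=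
    (tendsto_rpow_atTop hq_pos).comp tendsto_natCast_atTop_atTop
  have hNe : Tendsto (fun n : ℕ => (n:ℝ) ^ ((1 - q) * ε)) atTop atTop :=
    (tendsto_rpow_atTop (by nlinarith)).comp tendsto_natCast_atTop_atTop
  filter_upwards [hNq.eventually_ge_atTop X, hNe.eventually_ge_atTop 2,
    eventually_gt_atTop 1] with n hnX hn2 hn1 h
  set N : ℝ := (n:ℝ) with hN_def
  have hN1 : (1:ℝ) < N := by rw [hN_def]; exact_mod_cast hn1
  have hN0 : (0:ℝ) < N := by linarith
  set a : ℝ := N ^ q with ha_def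
  set b : ℝ := N ^ (q + ε) with hb_def
  have ha_pos : 0 < a := Real.rpow_pos_of_pos hN0 q
  have hb_pos : 0 < b := Real.rpow_pos_of_pos hN0 _
  have hab : a < b := by
    rw [ha_def, hb_def, Real.rpow_lt_rpow_left_iff hN1]; linarith
  have ha_mem : a ∈ Set.Ici (0:ℝ) := le_of_lt ha_pos
  have hb_mem : b ∈ Set.Ici (0:ℝ) := le_of_lt hb_pos
  -- MVT
  have hcont : ContinuousOn f (Set.Icc a b) := fun x hx =>
    ((hdiff x (le_trans (le_of_lt ha_pos) hx.1)).continuousAt).continuousWithinAt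
  have hdiffOn : ∀ x ∈ Set.Ioo a b, HasDerivAt f (deriv f x) x := fun x hx =>
    (hdiff x (le_trans (le_of_lt ha_pos) (le_of_lt hx.1))).hasDerivAt
  obtain ⟨c, hc, hc_eq⟩ := exists_deriv_eq_slope f hab hcont
    (fun x hx => (hdiff x (le_trans (le_of_lt ha_pos) (le_of_lt hx.1))).differentiableWithinAt)
  have hc_icc : c ∈ Set.Icc a b := ⟨le_of_lt hc.1, le_of_lt hc.2⟩
  have hfb_le_fa : f b ≤ f a := hanti ha_mem hb_mem (le_of_lt hab)
  have hba : 0 < b - a := sub_pos.mpr hab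
  have hderiv_nonpos : deriv f c ≤ 0 := by
    rw [hc_eq]
    exact div_nonpos_of_nonpos_of_nonneg (by linarith) (le_of_lt hba)
  have habs := h c hc_icc
  have hslope : 1 / N < (f a - f b) / (b - a) := by
    rw [abs_of_nonpos hderiv_nonpos, hc_eq] at habs
    have heq : -((f b - f a) / (b - a)) = (f a - f b) / (b - a) := by ring
    linarith
  have hkey : (b - a) * (1 / N) < f a - f b := by
    rw [lt_div_iff₀ hba] at hslope
    linarith
  -- decay bound on f a
  have hfa : f a < a ^ (ε - p) := hX a hnX
  have hfb_pos : 0 < f b := (hrange b (le_of_lt hb_pos)).1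
  -- so b - a < N * a^(ε-p)
  have hmain : b - a < a ^ (ε - p) * N := by
    have : (b - a) / N < a ^ (ε - p) := by
      have h' : (b - a) * (1/N) = (b-a)/N := by ring
      rw [h'] at hkey
      linarith
    exact (div_lt_iff₀ hN0).mp this
  -- rewrite in powers of N
  have e1 : a ^ (ε - p) = N ^ (q * (ε - p)) := by
    rw [ha_def, ← Real.rpow_mul (le_of_lt hN0)]
  have e2 : N ^ (q * (ε - p)) * N = N ^ q * N ^ (q * ε) := by
    nth_rewrite 2 [← Real.rpow_one N]
    rw [← Real.rpow_add hN0, ← Real.rpow_add hN0]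
    congr 1
    field_simp [hq_def]
    have hq1 : q * (p + 1) = 1 := by rw [hq_def]; exact div_mul_cancel₀ 1 hp1.ne'
    linear_combination -hq1
  have e3 : b = N ^ q * N ^ ε := by
    rw [hb_def, Real.rpow_add hN0]
  -- lower bound : N^ε - 1 ≥ N^(q*ε)
  have hqe_pos : 0 ≤ q * ε := by positivity
  have hNqe_ge1 : (1:ℝ) ≤ N ^ (q * ε) :=
    Real.one_le_rpow (le_of_lt hN1) hqe_pos
  have hNsplit : N ^ ε = N ^ (q * ε) * N ^ ((1 - q) * ε) := by
    rw [← Real.rpow_add hN0]; ring_nf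
  have hNe2 : N ^ ε ≥ 2 * N ^ (q * ε) := by
    rw [hNsplit]
    have := Real.rpow_pos_of_pos hN0 (q * ε)
    nlinarith
  have hlower : N ^ (q * ε) ≤ N ^ ε - 1 := by linarith
  -- contradiction
  have : N ^ q * N ^ (q * ε) ≤ b - a := by
    rw [e3, ha_def]
    have := Real.rpow_pos_of_pos hN0 q
    nlinarith
  rw [e1, e2] at hmain
  linarith
end

section
/- Let f : [0,∞) → (0,b] be convex with ∫₀^∞ f < ∞. Let Ω = {(r,s) ∈ ℝ²_{≥0} : s ≤ f(r)} and let Ω' be the union over all tangent lines L to the graph of f having rational slope of the triangles bounded by the coordinate axes and L (including the segments on the axes but excluding the hypotenuse). Then the interior of Ω (as a subset of ℝ²_{≥0} with the axes included appropriately) equals Ω', in the sense that: every point (a,b) with 0 ≤ a, 0 ≤ b < f(a') for some a' > a lies in some such rational-slope tangent triangle. -/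
open Real Set MeasureTheory

/-- Auxiliary: a positive integrable function on `[0,∞)` cannot be bounded
below by a positive constant on a tail `[v,∞)`. -/
lemma stmt_19_no_tail_bound (f : ℝ → ℝ)
    (hint : MeasureTheory.IntegrableOn f (Set.Ici 0))
    (c v : ℝ) (hc : 0 < c) (hv : 0 ≤ v) (hbd : ∀ x ≥ v, c ≤ f x) : False := by
  have h1 : MeasureTheory.IntegrableOn f (Set.Ici v) :=
    hint.mono_set (Set.Ici_subset_Ici.mpr hv)
  have h2 : MeasureTheory.Integrable (fun _ : ℝ => c)
      (MeasureTheory.volume.restrict (Set.Ici v)) := by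
    refine h1.mono' aestronglyMeasurable_const ?_
    filter_upwards [MeasureTheory.ae_restrict_mem measurableSet_Ici] with x hx
    rw [Real.norm_eq_abs, abs_of_pos hc]
    exact hbd x hx
  rw [MeasureTheory.integrable_const_iff] at h2
  rcases h2 with h | h
  · exact hc.ne' h
  · replace h := h.measure_univ_lt_top
    rw [MeasureTheory.Measure.restrict_apply_univ, Real.volume_Ici] at h
    exact (lt_irrefl _ h)

/-- Let `f : [0,∞) → (0,b]` be convex with `∫₀^∞ f < ∞`.  Every point
`(a, y)` of the "interior" of the region under the graph of `f` — i.e. with `a ≥ 0`,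
`y ≥ 0` and `y < f a'` for some `a' > a` — lies strictly inside the triangle bounded
by the coordinate axes and some tangent (supporting) line to the graph of `f` of
negative rational slope: there are `x₀ ≥ 0` and `m : ℚ` with `m < 0` such that the
line `r ↦ f x₀ + m·(r − x₀)` lies below the graph of `f` on `[0,∞)` and
`y < f x₀ + m·(a − x₀)`. -/
theorem stmt_19 (b : ℝ) (hb : 0 < b) (f : ℝ → ℝ)
    (hconv : ConvexOn ℝ (Set.Ici 0) f)
    (hrange : ∀ x ≥ (0:ℝ), 0 < f x ∧ f x ≤ b)
    (hint : MeasureTheory.IntegrableOn f (Set.Ici 0))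
    (a y : ℝ) (ha : 0 ≤ a) (hy : 0 ≤ y)
    (hinterior : ∃ a' > a, y < f a') :
    ∃ x₀ ≥ (0:ℝ), ∃ m : ℚ, (m : ℝ) < 0 ∧
      (∀ r ≥ (0:ℝ), f x₀ + (m : ℝ) * (r - x₀) ≤ f r) ∧
      y < f x₀ + (m : ℝ) * (a - x₀) := by
  obtain ⟨a', haa', hya'⟩ := hinterior
  have ha' : 0 < a' := lt_of_le_of_lt ha haa'
  have hfa' : 0 < f a' := (hrange a' ha'.le).1
  obtain ⟨δ, hδdef⟩ : ∃ δ : ℝ, δ = f a' - y := ⟨_, rfl⟩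
  have hδ : 0 < δ := by rw [hδdef]; linarith
  -- f is strictly decreasing on [0, ∞)
  have hdec : ∀ u v : ℝ, 0 ≤ u → u < v → f v < f u := by
    intro u v hu huv
    by_contra hcon
    push_neg at hcon
    refine stmt_19_no_tail_bound f hint (f u) v ((hrange u hu).1) (le_trans hu huv.le) ?_
    intro x hx
    rcases eq_or_lt_of_le hx with rfl | hvx
    · exact hcon
    · have hslope := hconv.secant_mono_aux2 (Set.mem_Ici.mpr hu)
        (Set.mem_Ici.mpr (le_trans hu (huv.le.trans hvx.le))) huv hvx
      have h1 : (0:ℝ) ≤ (f v - f u) / (v - u) := by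
        apply div_nonneg (by linarith) (by linarith)
      have h2 : (0:ℝ) ≤ (f x - f u) / (x - u) := le_trans h1 hslope
      have hxu : 0 < x - u := by linarith
      have h4 : (f x - f u) / (x - u) * (x - u) = f x - f u :=
        div_mul_cancel₀ _ hxu.ne'
      nlinarith [mul_nonneg h2 hxu.le]
  -- the right derivative q at a'
  have hSne : ((fun x => (f x - f a') / (x - a')) '' Set.Ioi a').Nonempty :=
    ⟨_, ⟨a' + 1, by simp, rfl⟩⟩
  have hlb : ∀ x, a' < x → (f a' - f 0) / a' ≤ (f x - f a') / (x - a') := by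
    intro x hx
    have := hconv.slope_mono_adjacent (Set.mem_Ici.mpr le_rfl)
      (Set.mem_Ici.mpr (ha'.le.trans hx.le)) ha' hx
    simpa using this
  have hbdd : BddBelow ((fun x => (f x - f a') / (x - a')) '' Set.Ioi a') := by
    refine ⟨(f a' - f 0) / a', ?_⟩
    rintro s ⟨x, hx, rfl⟩
    exact hlb x hx
  obtain ⟨q, hqdef⟩ : ∃ q : ℝ,
      q = sInf ((fun x => (f x - f a') / (x - a')) '' Set.Ioi a') := ⟨_, rfl⟩
  have hqle : ∀ x, a' < x → q ≤ (f x - f a') / (x - a') := by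
    intro x hx
    rw [hqdef]
    exact csInf_le hbdd ⟨x, hx, rfl⟩
  have hq_ge : ∀ r, 0 ≤ r → r < a' → (f a' - f r) / (a' - r) ≤ q := by
    intro r hr hra'
    rw [hqdef]
    refine le_csInf hSne ?_
    rintro s ⟨x, hx, rfl⟩
    exact hconv.slope_mono_adjacent (Set.mem_Ici.mpr hr)
      (Set.mem_Ici.mpr (ha'.le.trans (Set.mem_Ioi.mp hx).le)) hra' hx
  have hq0 : q < 0 := by
    have h1 : q ≤ (f (a' + 1) - f a') / (a' + 1 - a') := hqle (a' + 1) (by linarith)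
    have h2 : f (a' + 1) < f a' := hdec a' (a' + 1) ha'.le (by linarith)
    have h3 : (f (a' + 1) - f a') / (a' + 1 - a') < 0 :=
      div_neg_of_neg_of_pos (by linarith) (by linarith)
    linarith
  -- q is a supporting slope at a'
  have hqsupp : ∀ x, 0 ≤ x → f a' + q * (x - a') ≤ f x := by
    intro x hx
    rcases lt_trichotomy x a' with h | h | h
    · have h1 := hq_ge x hx h
      rw [div_le_iff₀ (by linarith)] at h1
      nlinarith
    · subst h; simp
    · have h1 := hqle x h
      rw [le_div_iff₀ (by linarith)] at h1
      nlinarith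
  -- the cutoff point X
  obtain ⟨X, hXdef⟩ : ∃ X : ℝ, X = a' + 2 * f a' / (-q) + 1 := ⟨_, rfl⟩
  have hfrac : 0 < 2 * f a' / (-q) := div_pos (by linarith) (by linarith)
  have hXa' : a' < X := by rw [hXdef]; linarith
  have hfX : 0 < f X := (hrange X (ha'.le.trans hXa'.le)).1
  have hslX : q / 2 < (f X - f a') / (X - a') := by
    rw [lt_div_iff₀ (by linarith)]
    have hkey : q / 2 * (X - a') = -f a' + q / 2 := by
      rw [hXdef]
      field_simp [hq0.ne]
      ring
    nlinarith
  -- choose rational slope m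
  obtain ⟨ε, hεdef⟩ : ∃ ε : ℝ, ε = min (-q / 4) (δ / (2 * (X - a'))) := ⟨_, rfl⟩
  have hε : 0 < ε := by
    rw [hεdef]
    exact lt_min (by linarith) (div_pos hδ (by linarith))
  have hε1 : ε ≤ -q / 4 := hεdef ▸ min_le_left _ _
  have hε2 : ε ≤ δ / (2 * (X - a')) := hεdef ▸ min_le_right _ _
  obtain ⟨m, hmq, hm'⟩ := exists_rat_btwn (show q < q + ε by linarith)
  have hm0 : (m : ℝ) < 0 := by linarith
  have hmX : (m : ℝ) < (f X - f a') / (X - a') := by linarith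
  have hmX' : (m : ℝ) * (X - a') < f X - f a' := by
    rw [lt_div_iff₀ (by linarith)] at hmX
    linarith
  -- minimize h x = f x - m x on [a', X]
  have hcont : ContinuousOn f (Set.Ioi 0) := by
    have := hconv.continuousOn_interior
    rwa [interior_Ici] at this
  have hKsub : Set.Icc a' X ⊆ Set.Ioi 0 := fun x hx => lt_of_lt_of_le ha' hx.1
  have hhc : ContinuousOn (fun x => f x - (m : ℝ) * x) (Set.Icc a' X) :=
    (hcont.mono hKsub).sub ((continuous_const.mul continuous_id).continuousOn)
  obtain ⟨x₀, hx₀K, hmin⟩ := isCompact_Icc.exists_isMinOn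
    ⟨a', Set.left_mem_Icc.mpr hXa'.le⟩ hhc
  have hminle : ∀ r, r ∈ Set.Icc a' X → f x₀ - (m : ℝ) * x₀ ≤ f r - (m : ℝ) * r :=
    fun r hr => hmin hr
  have hax₀ : a' ≤ x₀ := hx₀K.1
  have hx₀X : x₀ ≤ X := hx₀K.2
  have hx₀0 : (0:ℝ) ≤ x₀ := le_trans ha'.le hax₀
  have hha' : f x₀ - (m : ℝ) * x₀ ≤ f a' - (m : ℝ) * a' :=
    hminle a' (Set.left_mem_Icc.mpr hXa'.le)
  have hx₀ltX : x₀ < X := by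
    rcases eq_or_lt_of_le hx₀X with heq | h
    · exfalso
      rw [heq] at hha'
      linarith
    · exact h
  refine ⟨x₀, hx₀0, m, hm0, ?_, ?_⟩
  · -- supporting line property
    intro r hr
    rcases lt_or_ge r a' with hra' | hr1
    · rcases eq_or_lt_of_le hax₀ with heq | hlt
      · -- x₀ = a'
        have h1 := hq_ge r hr hra'
        rw [div_le_iff₀ (by linarith)] at h1
        rw [← heq]
        nlinarith [mul_le_mul_of_nonneg_right hmq.le (show (0:ℝ) ≤ a' - r by linarith)]
      · -- a' < x₀
        have h1 : (f x₀ - f a') / (x₀ - a') ≤ (m : ℝ) := by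
          rw [div_le_iff₀ (by linarith)]
          linarith
        have h2 : (f x₀ - f r) / (x₀ - r) ≤ (f x₀ - f a') / (x₀ - a') :=
          hconv.secant_mono_aux3 (Set.mem_Ici.mpr hr) (Set.mem_Ici.mpr hx₀0) hra' hlt
        have h3 : (f x₀ - f r) / (x₀ - r) ≤ (m : ℝ) := le_trans h2 h1
        rw [div_le_iff₀ (by linarith)] at h3
        linarith
    · rcases le_or_gt r X with hr2 | hr3
      · have := hminle r ⟨hr1, hr2⟩
        linarith
      · -- r > X
        have hXmem : X ∈ Set.Icc a' X := Set.right_mem_Icc.mpr hXa'.le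
        have h1 : f x₀ - (m : ℝ) * x₀ ≤ f X - (m : ℝ) * X := hminle X hXmem
        have h2 : (m : ℝ) ≤ (f X - f x₀) / (X - x₀) := by
          rw [le_div_iff₀ (by linarith)]
          linarith
        have h3 : (f X - f x₀) / (X - x₀) ≤ (f r - f X) / (r - X) :=
          hconv.slope_mono_adjacent (Set.mem_Ici.mpr hx₀0)
            (Set.mem_Ici.mpr (by linarith)) hx₀ltX hr3
        have h4 : (m : ℝ) ≤ (f r - f X) / (r - X) := le_trans h2 h3
        rw [le_div_iff₀ (by linarith)] at h4
        linarith
  · -- the value at a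
    have hA : f a' + q * (x₀ - a') ≤ f x₀ := hqsupp x₀ hx₀0
    have hB : ((m : ℝ) - q) * (x₀ - a') ≤ ε * (X - a') :=
      mul_le_mul (by linarith) (by linarith) (by linarith) hε.le
    have hC : ε * (X - a') ≤ δ / 2 := by
      have h1 : ε * (X - a') ≤ δ / (2 * (X - a')) * (X - a') :=
        mul_le_mul_of_nonneg_right hε2 (by linarith)
      have h2 : δ / (2 * (X - a')) * (X - a') = δ / 2 := by
        rw [div_mul_eq_mul_div, mul_comm (2:ℝ) (X - a'), ← div_div,
          mul_div_assoc, div_self (show X - a' ≠ 0 by linarith), mul_one]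
      linarith
    have hD : 0 ≤ (m : ℝ) * (a - a') := by
      have h := mul_nonneg (neg_nonneg.mpr hm0.le) (sub_nonneg.mpr haa'.le)
      have heq : (-(m : ℝ)) * (a' - a) = (m : ℝ) * (a - a') := by ring
      linarith
    linarith [hA, hB, hC, hD]
end
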